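/- arXiv:1408.4514 — 5 statements merged into one kernel-verified Lean document; each statement's English description precedes it below -/
import Mathlib

section
/- Let I = [u+1, u+h] be an interval of h ≥ 3 consecutive integers with u ≥ 0, and let n ≥ 1. For any integer z ≥ 1, the number of n-tuples (x_1, ..., x_n) ∈ I^n with z = x_1 ⋯ x_n is at most exp(C_n · log h / log log h) for some constant C_n depending only on n. -/
/-!
If `u ≤ (h + 1) ^ n`, then `z ≤ h ^ (2n(n+1))` and every entry of a solution divides `z`, so
there are at most `τ(z) ^ n` solutions. Splitting the prime factors of `z` at `√(log h)` gives
`τ(z) ≤ exp (O_n(log h / log log h))`: the small primes are few and each has exponent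
`O(log h)`, while the exponents of the large ones sum to `O(log h / log log h)`.

If `u > (h + 1) ^ n`, write `x i = u + r i` with `0 ≤ r i ≤ h`. The coefficients of
`P = ∏ (X + r i)` lie in `[0, P(1)] ⊆ [0, (h + 1) ^ n] ⊆ [0, u)`, so they are the base-`u`
digits of `P(u) = z`. Hence `z` determines `P`, whose roots are the `-r i`, and every solution
is one of the at most `n!` rearrangements of one of them.
-/

open Finset Polynomial Real

namespace Polynomial

theorem eval_eq_eval_divX_mul_add_coeff_zero {R : Type*} [CommSemiring R] (p : R[X]) (b : R) :
    p.eval b = p.divX.eval b * b + p.coeff 0 := by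
  conv_lhs => rw [← divX_mul_X_add p]
  simp only [eval_add, eval_mul, eval_X, eval_C]

section BaseExpansion

variable {p q : ℤ[X]} {b : ℤ}

theorem eval_emod_eq_coeff_zero (hp : p.coeff 0 ∈ Set.Ico 0 b) : p.eval b % b = p.coeff 0 := by
  rw [eval_eq_eval_divX_mul_add_coeff_zero, add_comm, Int.add_mul_emod_self_right,
    Int.emod_eq_of_lt hp.1 hp.2]

theorem eval_ediv_eq_eval_divX (hp : p.coeff 0 ∈ Set.Ico 0 b) : p.eval b / b = p.divX.eval b := by
  rw [eval_eq_eval_divX_mul_add_coeff_zero, add_comm, Int.add_mul_ediv_right _ _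
    (hp.1.trans_lt hp.2).ne', Int.ediv_eq_zero_of_lt hp.1 hp.2, zero_add]

theorem eq_of_eval_eq_of_coeff_mem_Ico (hp : ∀ i, p.coeff i ∈ Set.Ico 0 b)
    (hq : ∀ i, q.coeff i ∈ Set.Ico 0 b) (h : p.eval b = q.eval b) : p = q := by
  ext i
  induction i generalizing p q with
  | zero => rw [← eval_emod_eq_coeff_zero (hp 0), ← eval_emod_eq_coeff_zero (hq 0), h]
  | succ i ih =>
    rw [← coeff_divX, ← coeff_divX]
    refine ih (fun j => ?_) (fun j => ?_) ?_
    · exact coeff_divX (p := p) ▸ hp _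
    · exact coeff_divX (p := q) ▸ hq _
    · rw [← eval_ediv_eq_eval_divX (hp 0), ← eval_ediv_eq_eval_divX (hq 0), h]

end BaseExpansion

section NonnegCoeff

variable {R : Type*} [CommSemiring R] [PartialOrder R] [IsOrderedRing R]

theorem coeff_mul_nonneg {p q : R[X]} (hp : ∀ i, 0 ≤ p.coeff i) (hq : ∀ i, 0 ≤ q.coeff i)
    (i : ℕ) : 0 ≤ (p * q).coeff i := by
  rw [coeff_mul]
  exact sum_nonneg fun x _ => mul_nonneg (hp _) (hq _)

theorem coeff_multiset_prod_nonneg {s : Multiset R[X]} (hs : ∀ p ∈ s, ∀ i, 0 ≤ p.coeff i)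
    (i : ℕ) : 0 ≤ s.prod.coeff i := by
  revert i
  refine Multiset.prod_induction _ s (fun p q => coeff_mul_nonneg) (fun i => ?_) hs
  rw [coeff_one]
  split_ifs <;> simp

theorem coeff_le_eval_one {p : R[X]} (hp : ∀ i, 0 ≤ p.coeff i) (k : ℕ) :
    p.coeff k ≤ p.eval 1 := by
  rw [eval_eq_sum_range]
  simp only [one_pow, mul_one]
  rcases le_or_gt k p.natDegree with hk | hk
  · exact single_le_sum (fun i _ => hp i) (mem_range.mpr (Nat.lt_succ_of_le hk))
  · rw [coeff_eq_zero_of_natDegree_lt hk]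
    exact sum_nonneg fun i _ => hp i

end NonnegCoeff

end Polynomial

namespace Multiset

variable {b h : ℤ}

theorem coeff_prod_X_sub_C_sub_mem_Ico {s : Multiset ℤ} (hb : (h + 1) ^ card s < b)
    (hs : ∀ x ∈ s, x ∈ Set.Icc b (b + h)) (i : ℕ) :
    (s.map fun x => X - C (b - x)).prod.coeff i ∈ Set.Ico 0 b := by
  have hnonneg : ∀ i, 0 ≤ (s.map fun x => X - C (b - x)).prod.coeff i := by
    refine coeff_multiset_prod_nonneg fun p hp j => ?_
    obtain ⟨x, hx, rfl⟩ := mem_map.mp hp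
    have := (hs x hx).1
    simp only [coeff_sub, coeff_X, coeff_C]
    split_ifs <;> linarith
  refine ⟨hnonneg i, (coeff_le_eval_one hnonneg i).trans_lt (lt_of_le_of_lt ?_ hb)⟩
  rw [eval_multiset_prod, map_map]
  calc (s.map fun x => eval 1 (X - C (b - x))).prod ≤ (s.map fun _ => h + 1).prod :=
        prod_map_le_prod_map₀ _ _
          (fun x hx => by simp only [eval_sub, eval_X, eval_C]; linarith [(hs x hx).1])
          (fun x hx => by simp only [eval_sub, eval_X, eval_C]; linarith [(hs x hx).2])
    _ = (h + 1) ^ card s := by simp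

theorem eq_of_prod_eq_of_mem_Icc {s t : Multiset ℤ} (hcard : card s = card t)
    (hb : (h + 1) ^ card s < b) (hs : ∀ x ∈ s, x ∈ Set.Icc b (b + h))
    (ht : ∀ x ∈ t, x ∈ Set.Icc b (b + h)) (hst : s.prod = t.prod) : s = t := by
  have heval : ∀ s : Multiset ℤ, (s.map fun x => X - C (b - x)).prod.eval b = s.prod := by
    intro s
    simp [eval_multiset_prod]
  have hpoly : (s.map fun x => X - C (b - x)).prod = (t.map fun x => X - C (b - x)).prod :=
    eq_of_eval_eq_of_coeff_mem_Ico (coeff_prod_X_sub_C_sub_mem_Ico hb hs)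
      (coeff_prod_X_sub_C_sub_mem_Ico (hcard ▸ hb) ht) (by rw [heval, heval, hst])
  have hroots : ∀ s : Multiset ℤ, (s.map fun x => X - C (b - x)).prod.roots = s.map (b - ·) :=
    fun s => by rw [← roots_multiset_prod_X_sub_C (s.map (b - ·)), map_map]; rfl
  exact map_injective sub_right_injective (by rw [← hroots, ← hroots, hpoly])

end Multiset

theorem Fin.exists_perm_eq_comp_of_univ_val_map_eq {n : ℕ} {α : Type*} [LinearOrder α]
    {x y : Fin n → α} (h : univ.val.map x = univ.val.map y) :
    ∃ σ : Equiv.Perm (Fin n), y = x ∘ σ := by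
  rw [Fin.univ_val_map, Fin.univ_val_map, Multiset.coe_eq_coe] at h
  have hsort : x ∘ Tuple.sort x = y ∘ Tuple.sort y :=
    List.ofFn_injective <| List.Perm.eq_of_sortedLE (Tuple.monotone_sort x).sortedLE_ofFn
      (Tuple.monotone_sort y).sortedLE_ofFn <|
        (((Tuple.sort x).ofFn_comp_perm x).trans h).trans ((Tuple.sort y).ofFn_comp_perm y).symm
  refine ⟨(Tuple.sort y)⁻¹.trans (Tuple.sort x), funext fun i => ?_⟩
  simpa using (congrFun hsort ((Tuple.sort y)⁻¹ i)).symm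

theorem Set.ncard_le_factorial_of_univ_val_map_eq {n : ℕ} {α : Type*} [LinearOrder α]
    {S : Set (Fin n → α)}
    (hS : ∀ x ∈ S, ∀ y ∈ S, Finset.univ.val.map x = Finset.univ.val.map y) :
    S.ncard ≤ n.factorial := by
  obtain rfl | ⟨x, hx⟩ := S.eq_empty_or_nonempty
  · simp
  have hsub : S ⊆ (fun σ : Equiv.Perm (Fin n) => x ∘ σ) '' Set.univ := fun y hy =>
    let ⟨σ, hσ⟩ := Fin.exists_perm_eq_comp_of_univ_val_map_eq (hS x hx y hy)
    ⟨σ, Set.mem_univ _, hσ.symm⟩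
  calc S.ncard ≤ ((fun σ : Equiv.Perm (Fin n) => x ∘ σ) '' Set.univ).ncard :=
        Set.ncard_le_ncard hsub (Set.toFinite _)
    _ ≤ (Set.univ : Set (Equiv.Perm (Fin n))).ncard := Set.ncard_image_le
    _ = n.factorial := by simp [Set.ncard_univ, Fintype.card_perm]

theorem Nat.card_divisors_le_log_succ_pow_mul_two_pow {N T : ℕ} (hN : N ≠ 0) (hT : 0 < T) :
    #N.divisors ≤ (Nat.log 2 N + 1) ^ T * 2 ^ Nat.log (T + 1) N := by
  rw [Nat.card_divisors hN, ← prod_filter_mul_prod_filter_not N.primeFactors (· ≤ T)]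
  refine Nat.mul_le_mul ?_ ?_
  · have hcard : #{p ∈ N.primeFactors | p ≤ T} ≤ T := by
      calc #{p ∈ N.primeFactors | p ≤ T} ≤ #(Icc 1 T) := card_le_card fun p hp => by
            simp only [mem_filter, Nat.mem_primeFactors] at hp
            exact mem_Icc.mpr ⟨hp.1.1.one_le, hp.2⟩
        _ = T := by simp
    calc ∏ p ∈ N.primeFactors with p ≤ T, (N.factorization p + 1)
        ≤ ∏ p ∈ N.primeFactors with p ≤ T, (Nat.log 2 N + 1) := by
          refine prod_le_prod' fun p hp => Nat.succ_le_succ (Nat.le_log_of_pow_le one_lt_two ?_)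
          have hp : p.Prime := Nat.prime_of_mem_primeFactors (mem_filter.mp hp).1
          exact (Nat.pow_le_pow_left hp.two_le _).trans (Nat.ordProj_le p hN)
      _ ≤ (Nat.log 2 N + 1) ^ T := by
          rw [prod_const]
          exact Nat.pow_le_pow_right (Nat.succ_pos _) hcard
  · have hpow : (T + 1) ^ ∑ p ∈ N.primeFactors with ¬p ≤ T, N.factorization p ≤ N := by
      rw [← prod_pow_eq_pow_sum]
      calc ∏ p ∈ N.primeFactors with ¬p ≤ T, (T + 1) ^ N.factorization p
          ≤ ∏ p ∈ N.primeFactors with ¬p ≤ T, p ^ N.factorization p :=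
            prod_le_prod' fun p hp =>
              Nat.pow_le_pow_left (Nat.succ_le_of_lt (not_le.mp (mem_filter.mp hp).2)) _
        _ ≤ ∏ p ∈ N.primeFactors, p ^ N.factorization p :=
            prod_le_prod_of_subset_of_one_le' (filter_subset _ _) fun p hp _ =>
              Nat.one_le_pow _ _ (Nat.prime_of_mem_primeFactors hp).pos
        _ = N := (Nat.prod_primeFactors_pow_factorization hN).symm
    calc ∏ p ∈ N.primeFactors with ¬p ≤ T, (N.factorization p + 1)
        ≤ ∏ p ∈ N.primeFactors with ¬p ≤ T, 2 ^ N.factorization p :=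
          prod_le_prod' fun p _ => Nat.lt_two_pow_self
      _ ≤ 2 ^ Nat.log (T + 1) N := by
          rw [prod_pow_eq_pow_sum]
          exact Nat.pow_le_pow_right two_pos (Nat.le_log_of_pow_le (by omega) hpow)

theorem Real.log_le_two_mul_sqrt {x : ℝ} (hx : 0 ≤ x) : log x ≤ 2 * √x := by
  have := log_le_rpow_div hx (by norm_num : (0 : ℝ) < 1 / 2)
  rw [← sqrt_eq_rpow] at this
  linarith

theorem Real.log_sq_le_sixteen_mul_sqrt {x : ℝ} (hx : 1 ≤ x) : log x ^ 2 ≤ 16 * √x := by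
  have h := log_le_rpow_div (by linarith) (by norm_num : (0 : ℝ) < 1 / 4)
  calc log x ^ 2 ≤ (x ^ (1 / 4 : ℝ) / (1 / 4)) ^ 2 := pow_le_pow_left₀ (log_nonneg hx) h 2
    _ = 16 * √x := by
      rw [div_pow, ← rpow_natCast, ← rpow_mul (by linarith), sqrt_eq_rpow]
      ring_nf

theorem Real.two_mul_sqrt_mul_add_log_le {c L : ℝ} (hc : 0 ≤ c) (hL : 1 < L) :
    2 * √L * (c + log L) ≤ (4 * c + 32) * L / log L := by
  rw [le_div_iff₀ (log_pos hL)]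
  calc 2 * √L * (c + log L) * log L = 2 * √L * (c * log L + log L ^ 2) := by ring
    _ ≤ 2 * √L * (c * (2 * √L) + 16 * √L) := by
        gcongr
        · exact log_le_two_mul_sqrt (by linarith)
        · exact log_sq_le_sixteen_mul_sqrt hL.le
    _ = (4 * c + 32) * √L ^ 2 := by ring
    _ = (4 * c + 32) * L := by rw [sq_sqrt (by linarith)]

theorem exists_card_divisors_le_exp (K : ℕ) : ∃ C : ℝ, ∀ L : ℝ, 1 < L → ∀ N : ℕ, N ≠ 0 →
    log N ≤ K * L → (#N.divisors : ℝ) ≤ exp (C * L / log L) := by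
  refine ⟨4 * log (2 * K + 1) + 32 + 2 * K, fun L hL N hN hlogN => ?_⟩
  set T := ⌈√L⌉₊
  have hlogL : 0 < log L := log_pos hL
  have hs : 1 ≤ √L := one_le_sqrt.mpr hL.le
  have hT : (T : ℝ) ≤ 2 * √L := by linarith [Nat.ceil_lt_add_one (sqrt_nonneg L)]
  have hlog2 : (Nat.log 2 N : ℝ) ≤ 2 * K * L := by
    refine (natLog_le_logb N 2).trans ?_
    rw [logb, Nat.cast_ofNat, div_le_iff₀ (log_pos one_lt_two)]
    nlinarith [log_two_gt_d9, (by positivity : (0 : ℝ) ≤ K * L)]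
  have hlogT : (Nat.log (T + 1) N : ℝ) ≤ 2 * K * L / log L := by
    have : log L / 2 ≤ log (T + 1 : ℕ) := by
      rw [← log_sqrt (by linarith)]
      exact log_le_log (by linarith) (by push_cast; linarith [Nat.le_ceil √L])
    refine (natLog_le_logb N (T + 1)).trans ?_
    rw [logb, div_le_div_iff₀ (by linarith) hlogL]
    nlinarith
  set c := log (2 * K + 1)
  have hc : 0 ≤ c := log_nonneg (by linarith [(Nat.cast_nonneg K : (0 : ℝ) ≤ K)])
  have hsmall : T * (c + log L) ≤ (4 * c + 32) * L / log L :=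
    (mul_le_mul_of_nonneg_right hT (by positivity)).trans (two_mul_sqrt_mul_add_log_le hc hL)
  calc (#N.divisors : ℝ) ≤ ((Nat.log 2 N + 1 : ℕ) : ℝ) ^ T * 2 ^ Nat.log (T + 1) N := by
        exact_mod_cast Nat.card_divisors_le_log_succ_pow_mul_two_pow hN
          (Nat.ceil_pos.mpr (by positivity))
    _ ≤ ((2 * K + 1) * L) ^ T * exp 1 ^ Nat.log (T + 1) N := by
        gcongr
        · push_cast
          nlinarith
        · linarith [add_one_le_exp (1 : ℝ)]
    _ = exp (T * (c + log L) + Nat.log (T + 1) N) := by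
        rw [exp_add, exp_nat_mul, ← log_mul (by positivity) (by positivity),
          exp_log (by positivity), ← exp_nat_mul, mul_one]
    _ ≤ exp ((4 * c + 32 + 2 * K) * L / log L) := by
        gcongr
        rw [add_mul, add_div]
        exact add_le_add hsmall hlogT

theorem Real.one_lt_log_of_three_le {x : ℝ} (hx : 3 ≤ x) : 1 < log x := by
  rw [lt_log_iff_exp_lt (by linarith)]
  linarith [exp_one_lt_three]

def shortIntervalFactorizations (n : ℕ) (u h z : ℤ) : Set (Fin n → ℤ) :=
  {x | (∀ i, x i ∈ Set.Icc (u + 1) (u + h)) ∧ z = ∏ i, x i}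

section ShortIntervalFactorizations

variable {n : ℕ} {u h z : ℤ}

theorem ncard_shortIntervalFactorizations_le_card_divisors_pow (hu : 0 ≤ u) :
    (shortIntervalFactorizations n u h z).ncard ≤ #z.natAbs.divisors ^ n := by
  set D : Finset (Fin n → ℤ) := Fintype.piFinset fun _ => z.natAbs.divisors.map Nat.castEmbedding
  have hsub : shortIntervalFactorizations n u h z ⊆ D := by
    rintro x ⟨hx, rfl⟩
    have hpos : ∀ i, 0 < x i := fun i => by linarith [(hx i).1]
    simp only [D, mem_coe, Fintype.mem_piFinset, mem_map, Nat.mem_divisors,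
      Nat.castEmbedding_apply]
    intro i
    refine ⟨(x i).natAbs, ⟨Int.natAbs_dvd_natAbs.mpr (dvd_prod_of_mem x (mem_univ i)), ?_⟩,
      Int.natAbs_of_nonneg (hpos i).le⟩
    exact Int.natAbs_ne_zero.mpr (prod_pos fun j _ => hpos j).ne'
  calc (shortIntervalFactorizations n u h z).ncard ≤ (D : Set (Fin n → ℤ)).ncard :=
        Set.ncard_le_ncard hsub (finite_toSet _)
    _ = #z.natAbs.divisors ^ n := by
        rw [Set.ncard_coe_finset, Fintype.card_piFinset, prod_const, card_map, card_univ,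
          Fintype.card_fin]

theorem ncard_shortIntervalFactorizations_le_factorial (hu : (h + 1) ^ n < u) :
    (shortIntervalFactorizations n u h z).ncard ≤ n.factorial := by
  refine Set.ncard_le_factorial_of_univ_val_map_eq fun x hx y hy => ?_
  have hmem : ∀ x ∈ shortIntervalFactorizations n u h z, ∀ a ∈ univ.val.map x,
      a ∈ Set.Icc u (u + h) := fun x hx a ha => by
    obtain ⟨i, -, rfl⟩ := Multiset.mem_map.mp ha
    exact Set.Icc_subset_Icc (by omega) le_rfl (hx.1 i)
  refine Multiset.eq_of_prod_eq_of_mem_Icc (by simp) (by simpa using hu) (hmem x hx) (hmem y hy) ?_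
  rw [← prod_eq_multiset_prod, ← prod_eq_multiset_prod, ← hx.2, ← hy.2]

theorem prod_le_pow_of_mem_Icc {x : Fin n → ℤ} (hu0 : 0 ≤ u) (hh : 2 ≤ h)
    (hu : u ≤ (h + 1) ^ n) (hx : ∀ i, x i ∈ Set.Icc (u + 1) (u + h)) :
    ∏ i, x i ≤ h ^ (2 * n * (n + 1)) := by
  have hbase : u + h ≤ (h ^ 2) ^ (n + 1) := by
    have h1 : (h + 1) ^ n ≤ (h ^ 2) ^ n := pow_le_pow_left₀ (by omega) (by nlinarith) n
    have h2 : 1 ≤ (h ^ 2) ^ n := one_le_pow₀ (by nlinarith)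
    have h3 : h ≤ h ^ 2 - 1 := by nlinarith
    rw [pow_succ]
    nlinarith [mul_le_mul_of_nonneg_right h2 (by linarith : 0 ≤ h ^ 2 - 1)]
  calc ∏ i, x i ≤ ∏ _i : Fin n, (u + h) :=
        prod_le_prod (fun i _ => by linarith [(hx i).1]) fun i _ => (hx i).2
    _ = (u + h) ^ n := by rw [prod_const, card_univ, Fintype.card_fin]
    _ ≤ ((h ^ 2) ^ (n + 1)) ^ n := pow_le_pow_left₀ (by omega) hbase n
    _ = h ^ (2 * n * (n + 1)) := by rw [← pow_mul, ← pow_mul]; ring_nf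

end ShortIntervalFactorizations

theorem exists_ncard_shortIntervalFactorizations_le_exp (n : ℕ) :
    ∃ C : ℝ, ∀ u h z : ℤ, 0 ≤ u → 3 ≤ h → u ≤ (h + 1) ^ n →
      ((shortIntervalFactorizations n u h z).ncard : ℝ) ≤ exp (C * log h / log (log h)) := by
  obtain ⟨C, hC⟩ := exists_card_divisors_le_exp (2 * n * (n + 1))
  refine ⟨n * C, fun u h z hu hh hsmall => ?_⟩
  obtain hempty | ⟨x, hx, rfl⟩ := (shortIntervalFactorizations n u h z).eq_empty_or_nonempty
  · rw [hempty, Set.ncard_empty, Nat.cast_zero]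
    positivity
  have hprod : 0 < ∏ i, x i := prod_pos fun i _ => by linarith [(hx i).1]
  have hlog : log ((∏ i, x i).natAbs : ℕ) ≤ (2 * n * (n + 1) : ℕ) * log h := by
    rw [← log_pow, Nat.cast_natAbs, Int.cast_abs, abs_of_pos (by exact_mod_cast hprod)]
    exact log_le_log (by exact_mod_cast hprod)
      (by exact_mod_cast prod_le_pow_of_mem_Icc hu (by omega) hsmall hx)
  calc ((shortIntervalFactorizations n u h _).ncard : ℝ)
      ≤ (#(∏ i, x i).natAbs.divisors : ℝ) ^ n := by
        exact_mod_cast ncard_shortIntervalFactorizations_le_card_divisors_pow hu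
    _ ≤ exp (C * log h / log (log h)) ^ n := by
        gcongr
        exact hC _ (one_lt_log_of_three_le (by exact_mod_cast hh)) _
          (Int.natAbs_ne_zero.mpr hprod.ne') hlog
    _ = exp (n * C * log h / log (log h)) := by rw [← exp_nat_mul]; ring_nf

theorem divisors_in_short_intervals_general (n : ℕ) :
    ∃ C : ℝ, ∀ u h z : ℤ, 0 ≤ u → 3 ≤ h → 1 ≤ z →
      ({x : Fin n → ℤ | (∀ i, x i ∈ Set.Icc (u + 1) (u + h)) ∧ z = ∏ i, x i}.ncard : ℝ)
        ≤ Real.exp (C * Real.log (h : ℝ) / Real.log (Real.log (h : ℝ))) := by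
  obtain ⟨C, hC⟩ := exists_ncard_shortIntervalFactorizations_le_exp n
  refine ⟨max C (log n.factorial), fun u h z hu hh _ => ?_⟩
  have hL : 1 < log h := one_lt_log_of_three_le (by exact_mod_cast hh)
  have hratio : 1 ≤ log h / log (log h) := by
    rw [one_le_div (log_pos hL)]
    linarith [log_le_sub_one_of_pos (by linarith : 0 < log h)]
  change ((shortIntervalFactorizations n u h z).ncard : ℝ) ≤ _
  rw [mul_div_assoc]
  rcases le_or_gt u ((h + 1) ^ n) with hsmall | hlarge
  · refine (hC u h z hu hh hsmall).trans (exp_le_exp.mpr ?_)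
    rw [mul_div_assoc]
    exact mul_le_mul_of_nonneg_right (le_max_left _ _) (zero_le_one.trans hratio)
  · calc _ ≤ (n.factorial : ℝ) := by
          exact_mod_cast ncard_shortIntervalFactorizations_le_factorial hlarge
      _ = exp (log n.factorial) := (exp_log (by positivity)).symm
      _ ≤ _ := exp_le_exp.mpr <| (le_max_right _ _).trans <|
          le_mul_of_one_le_right ((log_natCast_nonneg _).trans (le_max_right _ _)) hratio

/-- Divisors in short intervals: the number of ways to write `z` as a product of
`n` integers each in `[u+1, u+h]` is at most `exp(C_n log h / log log h)`. -/
theorem divisors_in_short_intervals (n : ℕ) (hn : 1 ≤ n) :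
    ∃ C : ℝ, ∀ u h z : ℤ, 0 ≤ u → 3 ≤ h → 1 ≤ z →
      ({x : Fin n → ℤ | (∀ i, x i ∈ Set.Icc (u + 1) (u + h)) ∧ z = ∏ i, x i}.ncard : ℝ)
        ≤ Real.exp (C * Real.log (h : ℝ) / Real.log (Real.log (h : ℝ))) :=
  divisors_in_short_intervals_general n
end

section
/- Let H ≥ 3 be real and let S be a finite set of nonzero integers with |s| ≤ H for all s ∈ S. For every integer r ≥ 1 there exists a constant c(r) depending only on r such that for all sufficiently large Q ≥ c(r) log H, there exists a square-free integer q that is a product of r distinct primes in [Q, 2Q] with #{s ∈ S : gcd(s,q) = 1} ≥ (1/2)·#S. -/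
/-!
Chebyshev's estimate for the central binomial coefficient, as in the proof of Bertrand's postulate,
gives `≫ Q / log Q` primes in `[Q, 2Q]`. A nonzero `s` with `|s| ≤ H` has at most
`log H / log Q` prime factors `≥ Q`, so by double counting at most `2 r log H / log Q` of these
primes divide more than `#S / (2 r)` elements of `S`. For `Q ≥ c r log H` and `Q` large, at least
`r` primes remain, and the product of `r` of them is coprime to all but at most
`r · #S / (2 r) = #S / 2` elements of `S`.
-/

open Finset Real

namespace Nat

theorem prod_range_pow_factorization_centralBinom_le (n : ℕ) (hn : 0 < n) :
    ∏ p ∈ range (2 * n / 3 + 1), p ^ (centralBinom n).factorization p ≤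
      (2 * n) ^ sqrt (2 * n) * 4 ^ (2 * n / 3) := by
  set f : ℕ → ℕ := fun p ↦ p ^ (centralBinom n).factorization p
  set S := {p ∈ range (2 * n / 3 + 1) | p.Prime}
  have hS : ∏ p ∈ S, f p = ∏ p ∈ range (2 * n / 3 + 1), f p := by
    refine prod_filter_of_ne fun p _ h ↦ ?_
    contrapose! h
    simp only [f, factorization_eq_zero_of_not_prime _ h, pow_zero]
  rw [← hS, ← prod_filter_mul_prod_filter_not S (· ≤ sqrt (2 * n))]
  gcongr
  · have hcard : #{p ∈ S | p ≤ sqrt (2 * n)} ≤ sqrt (2 * n) := by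
      refine (card_le_card fun p hp ↦ ?_).trans (card_Icc 1 _).le
      simp only [S, mem_filter] at hp
      exact mem_Icc.2 ⟨hp.1.2.one_lt.le, hp.2⟩
    calc ∏ p ∈ S with p ≤ sqrt (2 * n), f p
        ≤ (2 * n) ^ #{p ∈ S | p ≤ sqrt (2 * n)} :=
          prod_le_pow_card _ _ _ fun p _ ↦ pow_factorization_choose_le (by omega)
      _ ≤ (2 * n) ^ sqrt (2 * n) := pow_right_mono₀ (by omega) hcard
  · -- above `√(2n)` every prime occurs at most once in `centralBinom n`
    calc ∏ p ∈ S with ¬p ≤ sqrt (2 * n), f p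
        ≤ ∏ p ∈ S with ¬p ≤ sqrt (2 * n), p := by
          refine prod_le_prod' fun p hp ↦ ?_
          simp only [S, mem_filter] at hp
          exact (pow_right_mono₀ hp.1.2.one_lt.le (factorization_choose_le_one
            (sqrt_lt'.1 (not_le.1 hp.2)))).trans (pow_one p).le
      _ ≤ primorial (2 * n / 3) :=
          prod_le_prod_of_subset_of_one_le' (filter_subset _ _)
            fun p hp _ ↦ (mem_filter.1 hp).2.one_lt.le
      _ ≤ 4 ^ (2 * n / 3) := primorial_le_four_pow _

theorem centralBinom_le_mul_pow_card_primes_Ioc (n : ℕ) (hn : 2 < n) :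
    centralBinom n ≤
      (2 * n) ^ sqrt (2 * n) * 4 ^ (2 * n / 3) * (2 * n) ^ #{p ∈ Ioc n (2 * n) | p.Prime} := by
  set f : ℕ → ℕ := fun p ↦ p ^ (centralBinom n).factorization p
  have hsmall : {p ∈ range (2 * n + 1) | p ≤ 2 * n / 3} = range (2 * n / 3 + 1) := by
    ext p; simp only [mem_filter, mem_range]; omega
  -- primes in `(2n/3, n]` do not divide `centralBinom n`
  have hlarge : ∏ p ∈ Ioc n (2 * n) with p.Prime, f p =
      ∏ p ∈ range (2 * n + 1) with ¬p ≤ 2 * n / 3, f p := by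
    refine prod_subset (fun p hp ↦ ?_) fun p hp hpT ↦ ?_
    · simp only [mem_filter, mem_Ioc, mem_range] at hp ⊢; omega
    simp only [mem_filter, mem_Ioc, mem_range, not_and, not_le] at hp hpT
    by_cases hp' : p.Prime
    · simp only [f, factorization_centralBinom_of_two_mul_self_lt_three_mul hn
        (not_lt.1 fun h ↦ hpT ⟨h, by omega⟩ hp') (by omega), pow_zero]
    · simp only [f, factorization_eq_zero_of_not_prime _ hp', pow_zero]
  rw [← prod_pow_factorization_centralBinom, ← prod_filter_mul_prod_filter_not _ (· ≤ 2 * n / 3),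
    hsmall, ← hlarge]
  gcongr
  · exact prod_range_pow_factorization_centralBinom_le n (by omega)
  · exact prod_le_pow_card _ _ _ fun p _ ↦ pow_factorization_choose_le (by omega)

end Nat

theorem log_add_sqrt_mul_log_le {x : ℝ} (hx : 10 ^ 8 ≤ x) :
    log x + √(2 * x) * log (2 * x) ≤ x / 6 := by
  set u := √√(2 * x)
  have hu0 : 0 ≤ u := sqrt_nonneg _
  have hu2 : u ^ 2 = √(2 * x) := sq_sqrt (sqrt_nonneg _)
  have hu4 : u ^ 4 = 2 * x := by
    rw [show u ^ 4 = (u ^ 2) ^ 2 by ring, hu2, sq_sqrt (by linarith)]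
  have hu96 : 96 ≤ u := by
    by_contra! h
    have := pow_lt_pow_left₀ h hu0 (by norm_num : 4 ≠ 0)
    linarith
  have hlog : log (2 * x) ≤ 4 * u := by
    rw [← hu4, log_pow]
    have := log_le_sub_one_of_pos (x := u) (by linarith)
    push_cast; linarith
  have hlogx : log x ≤ log (2 * x) := log_le_log (by linarith) (by linarith)
  calc log x + √(2 * x) * log (2 * x) ≤ 4 * u + u ^ 2 * (4 * u) := by
        rw [← hu2]; gcongr; linarith
    _ ≤ u ^ 4 / 12 := by nlinarith [pow_nonneg hu0 3]
    _ = x / 6 := by rw [hu4]; ring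

theorem le_four_mul_card_primes_Ioc_mul_log {n : ℕ} (hn : 10 ^ 8 ≤ n) :
    (n : ℝ) ≤ 4 * #{p ∈ Ioc n (2 * n) | p.Prime} * log (2 * n) := by
  set t := #{p ∈ Ioc n (2 * n) | p.Prime}
  have hnat : 4 ^ n < n * ((2 * n) ^ Nat.sqrt (2 * n) * 4 ^ (2 * n / 3) * (2 * n) ^ t) :=
    (Nat.four_pow_lt_mul_centralBinom n (by omega)).trans_le
      (Nat.mul_le_mul_left n (Nat.centralBinom_le_mul_pow_card_primes_Ioc n (by omega)))
  have hn0 : (0 : ℝ) < n := by positivity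
  have hreal : (4 : ℝ) ^ n <
      n * ((2 * n) ^ Nat.sqrt (2 * n) * 4 ^ (2 * n / 3 : ℕ) * (2 * n) ^ t) := by
    exact_mod_cast hnat
  have hlog := log_lt_log (by positivity) hreal
  rw [log_mul hn0.ne' (by positivity), log_mul (by positivity) (by positivity),
    log_mul (by positivity) (by positivity), log_pow, log_pow, log_pow, log_pow] at hlog
  have hsqrt : (Nat.sqrt (2 * n) : ℝ) ≤ √(2 * n) := by
    exact_mod_cast Real.nat_sqrt_le_real_sqrt (a := 2 * n)
  have hdiv : ((2 * n / 3 : ℕ) : ℝ) ≤ 2 * n / 3 := by exact_mod_cast Nat.cast_div_le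
  have hlog4 : 5 / 4 ≤ log 4 := by
    rw [show (4 : ℝ) = 2 ^ 2 by norm_num, log_pow]
    linarith [log_two_gt_d9]
  have hlog2n : 0 ≤ log (2 * n) := log_nonneg (by norm_cast; omega)
  have hrest := log_add_sqrt_mul_log_le (x := n) (by exact_mod_cast hn)
  linarith [mul_le_mul_of_nonneg_right hsqrt hlog2n,
    mul_le_mul_of_nonneg_right hdiv (log_nonneg (by norm_num : (1 : ℝ) ≤ 4)),
    mul_le_mul_of_nonneg_left hlog4 hn0.le]

section PrimeDivisors

variable {T : Finset ℕ} {Q H : ℝ} {S : Finset ℤ}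

theorem card_filter_dvd_mul_log_le (hQ : 0 < Q) (hT : ∀ p ∈ T, p.Prime ∧ Q ≤ p) {s : ℤ}
    (hs : s ≠ 0) : #{p ∈ T | ↑p ∣ s} * log Q ≤ log |(s : ℝ)| := by
  set F := {p ∈ T | ↑p ∣ s}
  have hdvd : ∏ p ∈ F, p ∣ s.natAbs :=
    prod_primes_dvd _ (fun p hp ↦ (hT p (mem_filter.1 hp).1).1.prime)
      fun p hp ↦ Int.natCast_dvd.1 (mem_filter.1 hp).2
  have hpow : Q ^ #F ≤ |(s : ℝ)| := calc
    Q ^ #F = ∏ _p ∈ F, Q := (prod_const Q).symm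
    _ ≤ ∏ p ∈ F, (p : ℝ) :=
      prod_le_prod (fun _ _ ↦ hQ.le) fun p hp ↦ (hT p (mem_filter.1 hp).1).2
    _ = ((∏ p ∈ F, p : ℕ) : ℝ) := by push_cast; rfl
    _ ≤ s.natAbs := by exact_mod_cast Nat.le_of_dvd (Int.natAbs_pos.2 hs) hdvd
    _ = |(s : ℝ)| := by rw [Nat.cast_natAbs, Int.cast_abs]
  rw [← log_pow]
  exact log_le_log (by positivity) hpow

theorem sum_card_filter_dvd_mul_log_le (hQ : 0 < Q) (hT : ∀ p ∈ T, p.Prime ∧ Q ≤ p)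
    (hS : ∀ s ∈ S, s ≠ 0 ∧ |(s : ℝ)| ≤ H) :
    (∑ p ∈ T, #{s ∈ S | ↑p ∣ s} : ℝ) * log Q ≤ #S * log H := by
  have hswap : ∑ p ∈ T, #{s ∈ S | ↑p ∣ s} = ∑ s ∈ S, #{p ∈ T | ↑p ∣ s} :=
    sum_card_bipartiteAbove_eq_sum_card_bipartiteBelow (fun (p : ℕ) (s : ℤ) ↦ (p : ℤ) ∣ s)
  calc (∑ p ∈ T, #{s ∈ S | ↑p ∣ s} : ℝ) * log Q
      = ∑ s ∈ S, #{p ∈ T | ↑p ∣ s} * log Q := by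
        rw [← sum_mul]; exact_mod_cast congrArg (fun k : ℕ ↦ (k : ℝ) * log Q) hswap
    _ ≤ ∑ _s ∈ S, log H := sum_le_sum fun s hs ↦
        (card_filter_dvd_mul_log_le hQ hT (hS s hs).1).trans
          (log_le_log (by simpa using (hS s hs).1) (hS s hs).2)
    _ = #S * log H := by rw [sum_const, nsmul_eq_mul]

theorem card_filter_lt_mul_card_dvd_mul_log_le (hQ : 1 ≤ Q) (hH : 1 ≤ H)
    (hT : ∀ p ∈ T, p.Prime ∧ Q ≤ p) (hS : ∀ s ∈ S, s ≠ 0 ∧ |(s : ℝ)| ≤ H) (m : ℕ) :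
    #{p ∈ T | #S < m * #{s ∈ S | ((p : ℕ) : ℤ) ∣ s}} * log Q ≤ m * log H := by
  set d : ℕ → ℕ := fun p ↦ #{s ∈ S | ↑p ∣ s}
  set B := {p ∈ T | #S < m * d p}
  have hB : #B * (#S + 1) ≤ m * ∑ p ∈ T, d p := calc
    #B * (#S + 1) = ∑ _p ∈ B, (#S + 1) := by rw [sum_const, smul_eq_mul]
    _ ≤ ∑ p ∈ B, m * d p := sum_le_sum fun p hp ↦ (mem_filter.1 hp).2
    _ = m * ∑ p ∈ B, d p := (mul_sum ..).symm
    _ ≤ m * ∑ p ∈ T, d p := by gcongr; exact filter_subset _ _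
  have hBS : (#B : ℝ) * (#S + 1) * log Q ≤ m * (#S * log H) := calc
    (#B : ℝ) * (#S + 1) * log Q ≤ (m * ∑ p ∈ T, d p : ℕ) * log Q :=
        mul_le_mul_of_nonneg_right (by exact_mod_cast hB) (log_nonneg hQ)
    _ = m * ((∑ p ∈ T, d p : ℝ) * log Q) := by push_cast; ring
    _ ≤ m * (#S * log H) := mul_le_mul_of_nonneg_left
        (sum_card_filter_dvd_mul_log_le (by linarith) hT hS) m.cast_nonneg
  nlinarith [mul_nonneg m.cast_nonneg (log_nonneg hH)]

theorem card_filter_gcd_prod_ne_one_le (S : Finset ℤ) {P : Finset ℕ} (hP : ∀ p ∈ P, p.Prime) :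
    #{s ∈ S | Int.gcd s ↑(∏ p ∈ P, p) ≠ 1} ≤ ∑ p ∈ P, #{s ∈ S | ↑p ∣ s} := by
  refine (card_le_card fun s hs ↦ ?_).trans card_biUnion_le
  simp only [mem_filter, mem_biUnion] at hs ⊢
  by_contra! h
  refine hs.2 (Nat.Coprime.prod_right fun p hp ↦ Nat.coprime_comm.1 ?_)
  exact (hP p hp).coprime_iff_not_dvd.2 fun hdvd ↦ h p hp hs.1 (Int.natCast_dvd.2 hdvd)

theorem exists_subset_card_eq_half_le_card_filter_coprime (hQ : 1 < Q) (hH : 1 ≤ H)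
    (hT : ∀ p ∈ T, p.Prime ∧ Q ≤ p) (hS : ∀ s ∈ S, s ≠ 0 ∧ |(s : ℝ)| ≤ H) {r : ℕ} (hr : 0 < r)
    (hcard : r * log Q + 2 * r * log H ≤ #T * log Q) :
    ∃ P ⊆ T, #P = r ∧ (#S : ℝ) / 2 ≤ #{s ∈ S | Int.gcd s ↑(∏ p ∈ P, p) = 1} := by
  set d : ℕ → ℕ := fun p ↦ #{s ∈ S | ↑p ∣ s}
  set B := {p ∈ T | #S < 2 * r * d p}
  have hB : #B * log Q ≤ 2 * r * log H := by
    exact_mod_cast card_filter_lt_mul_card_dvd_mul_log_le hQ.le hH hT hS (2 * r)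
  have hrB : r ≤ #(T \ B) := by
    have : ((r + #B : ℕ) : ℝ) ≤ #T :=
      le_of_mul_le_mul_right (by push_cast; linarith) (log_pos hQ)
    have := Nat.cast_le.1 this
    have := card_le_card_sdiff_add_card (s := T) (t := B)
    omega
  obtain ⟨P, hPTB, hPr⟩ := exists_subset_card_eq hrB
  refine ⟨P, hPTB.trans sdiff_subset, hPr, ?_⟩
  have hgood : ∀ p ∈ P, 2 * r * d p ≤ #S := fun p hp ↦
    not_lt.1 fun h ↦ (mem_sdiff.1 (hPTB hp)).2 (mem_filter.2 ⟨(mem_sdiff.1 (hPTB hp)).1, h⟩)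
  have hbad := card_filter_gcd_prod_ne_one_le S fun p hp ↦ (hT p (sdiff_subset (hPTB hp))).1
  have h2bad : r * (2 * #{s ∈ S | Int.gcd s ↑(∏ p ∈ P, p) ≠ 1}) ≤ r * #S := calc
    _ ≤ ∑ p ∈ P, 2 * r * d p := by
        rw [← mul_sum, ← mul_assoc, mul_comm r 2]; exact Nat.mul_le_mul_left _ hbad
    _ ≤ ∑ _p ∈ P, #S := sum_le_sum hgood
    _ = r * #S := by rw [sum_const, hPr, smul_eq_mul]
  have hsplit := card_filter_add_card_filter_not (s := S) fun s ↦ Int.gcd s ↑(∏ p ∈ P, p) = 1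
  simp only [← ne_eq] at hsplit
  have := Nat.le_of_mul_le_mul_left h2bad hr
  rw [div_le_iff₀ two_pos]
  exact_mod_cast (by omega : #S ≤ #{s ∈ S | Int.gcd s ↑(∏ p ∈ P, p) = 1} * 2)

end PrimeDivisors

theorem Nat.squarefree_prod_of_forall_prime {P : Finset ℕ} (hP : ∀ p ∈ P, p.Prime) :
    Squarefree (∏ p ∈ P, p) :=
  squarefree_prod_of_pairwise_isCoprime
    (fun p hp q hq hpq ↦
      Nat.coprime_iff_isRelPrime.1 ((Nat.coprime_primes (hP p hp) (hP q hq)).2 hpq))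
    fun p hp ↦ (hP p hp).prime.squarefree

noncomputable def primesBetween (Q : ℝ) : Finset ℕ := {p ∈ Ioc ⌊Q⌋₊ (2 * ⌊Q⌋₊) | p.Prime}

section PrimesBetween

variable {Q : ℝ}

theorem prime_and_le_and_le_two_mul_of_mem_primesBetween (hQ : 0 ≤ Q) :
    ∀ p ∈ primesBetween Q, p.Prime ∧ Q ≤ p ∧ p ≤ 2 * Q := by
  intro p hp
  simp only [primesBetween, mem_filter, mem_Ioc] at hp
  refine ⟨hp.2, (Nat.lt_floor_add_one Q).le.trans (by exact_mod_cast hp.1.1), ?_⟩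
  calc (p : ℝ) ≤ (2 * ⌊Q⌋₊ : ℕ) := by exact_mod_cast hp.1.2
    _ ≤ 2 * Q := by push_cast; linarith [Nat.floor_le hQ]

theorem sub_one_le_eight_mul_card_primesBetween_mul_log (hQ : 10 ^ 8 ≤ Q) :
    Q - 1 ≤ 8 * #(primesBetween Q) * log Q := by
  set n := ⌊Q⌋₊
  have hn : 10 ^ 8 ≤ n := Nat.le_floor (by exact_mod_cast hQ)
  have hnQ : (n : ℝ) ≤ Q := Nat.floor_le (by linarith)
  have hlog : log (2 * n) ≤ 2 * log Q := calc
    log (2 * n) ≤ log (Q ^ 2) := log_le_log (by positivity) (by nlinarith)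
    _ = 2 * log Q := by rw [log_pow]; norm_num
  have hcount : (n : ℝ) ≤ 4 * #(primesBetween Q) * log (2 * n) :=
    le_four_mul_card_primes_Ioc_mul_log hn
  have := mul_le_mul_of_nonneg_left hlog (by positivity : (0 : ℝ) ≤ 4 * #(primesBetween Q))
  linarith [Nat.sub_one_lt_floor Q]

end PrimesBetween

/-- For any finite set `S` of nonzero integers bounded by `H`, and any `r ≥ 1`,
for sufficiently large `Q ≥ c(r) log H` there is a product `q` of `r` distinct
primes in `[Q, 2Q]` coprime to at least half of the elements of `S`. -/
theorem coprime_modulus_exists (r : ℕ) (hr : 1 ≤ r) :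
    ∃ c Q₀ : ℝ, ∀ Q H : ℝ, 3 ≤ H → Q₀ ≤ Q → c * Real.log H ≤ Q →
      ∀ S : Finset ℤ, (∀ s ∈ S, s ≠ 0 ∧ |(s : ℝ)| ≤ H) →
        ∃ q : ℕ, ∃ P : Finset ℕ, P.card = r ∧
          (∀ p ∈ P, p.Prime ∧ Q ≤ (p : ℝ) ∧ (p : ℝ) ≤ 2 * Q) ∧
          q = ∏ p ∈ P, p ∧ Squarefree q ∧
          (S.card : ℝ) / 2 ≤ ((S.filter fun s => Int.gcd s q = 1).card : ℝ) := by
  refine ⟨32 * r, 10 ^ 8 + 4096 * r ^ 2, fun Q H hH hQ₀ hcQ S hS ↦ ?_⟩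
  have hQ : 10 ^ 8 ≤ Q := by nlinarith
  have hT := prime_and_le_and_le_two_mul_of_mem_primesBetween (by linarith : 0 ≤ Q)
  -- the bad primes cost `2 r log H ≤ Q / 16`, and `log Q ≤ 2 √Q ≤ Q / (32 r)`
  have hlogQ : log Q ≤ 2 * √Q := calc
    log Q ≤ Q ^ (1 / 2 : ℝ) / (1 / 2) := log_le_rpow_div (by linarith) (by norm_num)
    _ = 2 * √Q := by rw [← sqrt_eq_rpow]; ring
  have hsqrt : 64 * r ≤ √Q := le_sqrt_of_sq_le (by nlinarith)
  have hcount := sub_one_le_eight_mul_card_primesBetween_mul_log hQ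
  obtain ⟨P, hPT, hPr, hcop⟩ := exists_subset_card_eq_half_le_card_filter_coprime
    (by linarith) (by linarith) (fun p hp ↦ (hT p hp).imp_right And.left) hS hr
    (by nlinarith [sq_sqrt (by linarith : 0 ≤ Q), sqrt_nonneg Q, (r.cast_nonneg : (0 : ℝ) ≤ r)])
  exact ⟨_, P, hPr, fun p hp ↦ hT p (hPT hp), rfl, Nat.squarefree_prod_of_forall_prime
    fun p hp ↦ (hT p (hPT hp)).1, hcop⟩
end

section
/- Let q ≥ 1 be an integer and G(X) = aX² + bX ∈ ℤ[X] with gcd(a, q) = 1. Then for any positive integer H, |∑_{z=1}^{H} e(G(z)/q)| ≪ H·q^{-1/2} + q^{1/2}·log q. -/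
open Finset Complex

open scoped Real ComplexConjugate

/-!
Weyl differencing: expanding `|S|²` and grouping the pairs `(w + h, w)` by their difference `h`
bounds `|S|²` by a sum over `|h| < H` of linear sums `∑ e(2ahw/q)` with `w` in intervals of
length at most `H`. By the geometric series such a sum is at most `H`, or `2 / |e(2ah/q) - 1|`
when `q ∤ 2ah`. As `h` runs over `|h| < H`, `2h` runs through an interval of length `4H`, which
meets each residue class mod `q` at most `4H/q + 1` times; `a` being invertible mod `q`, this
leaves `4H/q + 1` times a complete sum over `x mod q`. Finally `|e(x/q) - 1| ≥ 4‖x/q‖` turns the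
complete sum into a harmonic sum, of size `H + q (1 + log q)`. Altogether
`|S|² ≤ (4H/q + 1)(H + q (1 + log q)) ≤ 25 (H/√q + √q log q)²`.
-/

lemma sub_one_mul_sum_zpow_Icc {K : Type*} [Field K] {u : K} (hu : u ≠ 0) {m n : ℤ}
    (hmn : m - 1 ≤ n) : (u - 1) * ∑ w ∈ Icc m n, u ^ w = u ^ (n + 1) - u ^ m := by
  induction n, hmn using Int.leInduction with
  | base => simp
  | succ n hmn ih =>
    rw [← insert_Icc_right_eq_Icc_add_one (by omega), sum_insert (by simp), mul_add, ih,
      zpow_add_one₀ hu (n + 1)]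
    ring

lemma norm_sum_zpow_Icc_le {u : ℂ} (hu : ‖u‖ = 1) (hu1 : u ≠ 1) (m n : ℤ) :
    ‖∑ w ∈ Icc m n, u ^ w‖ ≤ 2 / ‖u - 1‖ := by
  have hu0 : u ≠ 0 := norm_ne_zero_iff.mp (by simp [hu])
  have hsub : 0 < ‖u - 1‖ := norm_pos_iff.mpr (sub_ne_zero.mpr hu1)
  rcases lt_or_ge n m with hnm | hmn
  · simp only [Icc_eq_empty_of_lt hnm, sum_empty, norm_zero]
    positivity
  rw [le_div_iff₀' hsub, ← norm_mul, sub_one_mul_sum_zpow_Icc hu0 (by omega)]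
  calc ‖u ^ (n + 1) - u ^ m‖ ≤ ‖u ^ (n + 1)‖ + ‖u ^ m‖ := norm_sub_le _ _
    _ = 2 := by simp [norm_zpow, hu]; norm_num

lemma two_mul_min_le_sin_pi_mul {t : ℝ} (h0 : 0 ≤ t) (h1 : t ≤ 1) :
    2 * min t (1 - t) ≤ Real.sin (π * t) := by
  have hπ := Real.pi_pos
  rcases le_total t (1 - t) with h | h
  · rw [min_eq_left h]
    have := Real.mul_le_sin (x := π * t) (by positivity) (by nlinarith)
    field_simp at this
    linarith
  · rw [min_eq_right h, ← Real.sin_pi_sub, show π - π * t = π * (1 - t) by ring]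
    have := Real.mul_le_sin (x := π * (1 - t)) (by nlinarith) (by nlinarith)
    field_simp at this
    linarith

lemma sum_Icc_mul_conj_sum_eq_sum_autocorrelation (f : ℤ → ℂ) (m n : ℤ) :
    (∑ z ∈ Icc m n, f z) * conj (∑ z ∈ Icc m n, f z) =
      ∑ h ∈ Icc (m - n) (n - m),
        ∑ w ∈ Icc (max m (m - h)) (min n (n - h)), f (w + h) * conj (f w) := by
  rw [map_sum, sum_mul_sum, ← sum_product', sum_sigma']
  refine sum_nbij' (fun p => ⟨p.1 - p.2, p.2⟩) (fun p => (p.2 + p.1, p.2)) ?_ ?_ ?_ ?_ ?_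
  all_goals simp only [mem_product, mem_sigma, mem_Icc]
  · omega
  · omega
  · simp
  · simp
  · simp

lemma norm_sum_Icc_sq_le_sum_norm_autocorrelation (f : ℤ → ℂ) (m n : ℤ) :
    ‖∑ z ∈ Icc m n, f z‖ ^ 2 ≤ ∑ h ∈ Icc (m - n) (n - m),
      ‖∑ w ∈ Icc (max m (m - h)) (min n (n - h)), f (w + h) * conj (f w)‖ := by
  have := norm_sum_le (Icc (m - n) (n - m)) fun h =>
    ∑ w ∈ Icc (max m (m - h)) (min n (n - h)), f (w + h) * conj (f w)
  rwa [← sum_Icc_mul_conj_sum_eq_sum_autocorrelation, norm_mul, Complex.norm_conj, ← sq] at this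

section ResidueClasses

variable {q : ℕ} [NeZero q]

lemma card_filter_intCast_eq_le (x : ZMod q) {m n : ℤ} (hmn : m ≤ n) :
    (#{k ∈ Icc m n | ((k : ℤ) : ZMod q) = x} : ℝ) ≤ ((n - m : ℤ) : ℝ) / q + 1 := by
  have hq : (0 : ℤ) < q := by exact_mod_cast NeZero.pos q
  have hN : 0 ≤ (n - m) / (q : ℤ) := Int.ediv_nonneg (by omega) hq.le
  have hcard : #{k ∈ Icc m n | ((k : ℤ) : ZMod q) = x} ≤ #(Icc 0 ((n - m) / (q : ℤ))) := by
    refine card_le_card_of_injOn (fun k : ℤ => (k - m) / (q : ℤ)) (fun k hk => ?_)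
      (fun k hk l hl hkl => ?_)
    · simp only [coe_filter, mem_Icc, Set.mem_ofPred_eq] at hk
      simp only [coe_Icc, Set.mem_Icc]
      exact ⟨Int.ediv_nonneg (by omega) hq.le, Int.ediv_le_ediv hq (by omega)⟩
    · simp only [coe_filter, Set.mem_ofPred_eq] at hk hl
      have hmod : (k - m) % q = (l - m) % q :=
        Int.ModEq.sub_right m ((ZMod.intCast_eq_intCast_iff _ _ _).mp (hk.2.trans hl.2.symm))
      have hk' := Int.mul_ediv_add_emod (k - m) q
      have hl' := Int.mul_ediv_add_emod (l - m) q
      simp only at hkl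
      rw [hkl, hmod] at hk'
      linarith
  rw [Int.card_Icc, sub_zero] at hcard
  have hmul : (#{k ∈ Icc m n | ((k : ℤ) : ZMod q) = x} : ℤ) * q ≤ n - m + q := by
    have : (#{k ∈ Icc m n | ((k : ℤ) : ZMod q) = x} : ℤ) ≤ (n - m) / q + 1 := by omega
    nlinarith [Int.ediv_mul_le (n - m) hq.ne']
  have hqR : (0 : ℝ) < q := by exact_mod_cast hq
  rw [div_add_one hqR.ne', le_div_iff₀ hqR]
  exact_mod_cast hmul

lemma sum_Icc_intCast_le_mul_sum (g : ZMod q → ℝ) (hg : ∀ x, 0 ≤ g x) {m n : ℤ} (hmn : m ≤ n) :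
    ∑ k ∈ Icc m n, g k ≤ (((n - m : ℤ) : ℝ) / q + 1) * ∑ x, g x := by
  rw [← sum_fiberwise (Icc m n) (fun k : ℤ => (k : ZMod q)), mul_sum]
  refine sum_le_sum fun x _ => ?_
  rw [sum_congr rfl fun k hk => congrArg g (mem_filter.mp hk).2, sum_const, nsmul_eq_mul]
  exact mul_le_mul_of_nonneg_right (card_filter_intCast_eq_le x hmn) (hg x)

end ResidueClasses

lemma sum_Icc_comp_two_mul_le (g : ℤ → ℝ) (hg : ∀ k, 0 ≤ g k) (m n : ℤ) :
    ∑ h ∈ Icc m n, g (2 * h) ≤ ∑ k ∈ Icc (2 * m) (2 * n), g k := by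
  rw [← sum_image fun a _ b _ hab => by simpa using hab]
  refine sum_le_sum_of_subset_of_nonneg (fun k hk => ?_) fun k _ _ => hg k
  simp only [mem_image, mem_Icc] at hk ⊢
  omega

lemma Nat.map_castEmbedding_Icc (a b : ℕ) : (Icc a b).map Nat.castEmbedding = Icc (a : ℤ) b := by
  ext z
  simp only [mem_map, mem_Icc, Nat.castEmbedding_apply]
  exact ⟨fun ⟨n, hn, hnz⟩ => by omega, fun hz => ⟨z.toNat, by omega, by omega⟩⟩

section StdAddChar

open ZMod

variable {q : ℕ} [NeZero q]

lemma four_mul_min_le_norm_stdAddChar_sub_one (x : ZMod q) :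
    4 * min ((x.val : ℝ) / q) (1 - x.val / q) ≤ ‖stdAddChar x - 1‖ := by
  set t : ℝ := x.val / q
  have ht0 : 0 ≤ t := by positivity
  have ht1 : t ≤ 1 := div_le_one_of_le₀ (by exact_mod_cast x.val_lt.le) (by positivity)
  have hexp : stdAddChar x = exp (I * ↑(2 * π * t)) := by
    rw [stdAddChar_apply, toCircle_eq_circleExp, Circle.coe_exp]
    simp only [t]
    push_cast
    ring_nf
  have hsin : 0 ≤ Real.sin (π * t) :=
    Real.sin_nonneg_of_nonneg_of_le_pi (by positivity) (by nlinarith [Real.pi_pos])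
  rw [hexp, norm_exp_I_mul_ofReal_sub_one, show 2 * π * t / 2 = π * t by ring, Real.norm_eq_abs,
    abs_of_nonneg (by positivity)]
  linarith [two_mul_min_le_sin_pi_mul ht0 ht1]

variable (q) in
-- At `x = 0` the formula `2 / ‖e(x/q) - 1‖` would give the junk value `2 / 0 = 0`.
noncomputable def linearSumBound (H : ℕ) (x : ZMod q) : ℝ :=
  if x = 0 then H else 2 / ‖stdAddChar x - 1‖

lemma linearSumBound_nonneg (H : ℕ) (x : ZMod q) : 0 ≤ linearSumBound q H x := by
  unfold linearSumBound
  split_ifs <;> positivity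

lemma norm_sum_stdAddChar_mul_Icc_le (x : ZMod q) {m n : ℤ} {H : ℕ} (hH : #(Icc m n) ≤ H) :
    ‖∑ w ∈ Icc m n, stdAddChar (x * (w : ZMod q))‖ ≤ linearSumBound q H x := by
  unfold linearSumBound
  split_ifs with hx
  · simpa [hx] using hH
  have hpow (w : ℤ) : stdAddChar (x * (w : ZMod q)) = stdAddChar x ^ w := by
    rw [mul_comm, ← zsmul_eq_mul, AddChar.map_zsmul_eq_zpow]
  simp only [hpow]
  refine norm_sum_zpow_Icc_le (AddChar.norm_apply _ _) (fun h => hx ?_) m n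
  rwa [← (stdAddChar (N := q)).map_zero_eq_one, injective_stdAddChar.eq_iff] at h

lemma linearSumBound_le_of_ne_zero (H : ℕ) {x : ZMod q} (hx : x ≠ 0) :
    linearSumBound q H x ≤ q / (2 * x.val) + q / (2 * (q - x.val : ℕ)) := by
  have hr : 0 < x.val := val_pos.mpr hx
  have hqr : 0 < q - x.val := Nat.sub_pos_of_lt x.val_lt
  have hq : (0 : ℝ) < q := by exact_mod_cast NeZero.pos q
  have hcast : ((q - x.val : ℕ) : ℝ) / q = 1 - x.val / q := by
    rw [Nat.cast_sub x.val_lt.le]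
    field_simp
  have hmin : 0 < min ((x.val : ℝ) / q) (1 - x.val / q) := by
    rw [← hcast]
    apply lt_min <;> positivity
  have hnorm := four_mul_min_le_norm_stdAddChar_sub_one x
  rw [linearSumBound, if_neg hx]
  calc 2 / ‖stdAddChar x - 1‖ ≤ 2 / (4 * min ((x.val : ℝ) / q) (1 - x.val / q)) := by gcongr
    _ ≤ _ := by
      rw [← hcast]
      rcases min_cases ((x.val : ℝ) / q) (((q - x.val : ℕ) : ℝ) / q) with ⟨h, -⟩ | ⟨h, -⟩ <;>
        rw [h] <;> field_simp <;>
        linarith [Nat.cast_nonneg (α := ℝ) x.val, Nat.cast_nonneg (α := ℝ) (q - x.val)]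

lemma sum_linearSumBound_le (H : ℕ) :
    ∑ x : ZMod q, linearSumBound q H x ≤ H + q * (1 + Real.log q) := by
  obtain ⟨n, rfl⟩ : ∃ n, q = n + 1 := Nat.exists_eq_add_one.mpr (NeZero.pos q)
  let g : ℕ → ℝ := fun r =>
    if r = 0 then H else (n + 1 : ℕ) / (2 * r) + (n + 1 : ℕ) / (2 * (n + 1 - r : ℕ))
  have hg (x : ZMod (n + 1)) : linearSumBound (n + 1) H x ≤ g x.val := by
    by_cases hx : x = 0
    · simp [hx, g, linearSumBound]
    · simpa [g, ZMod.val_eq_zero, hx] using linearSumBound_le_of_ne_zero H hx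
  have hreflect : ∑ r ∈ range n, ((n + 1 : ℕ) : ℝ) / (2 * (n - r : ℕ)) =
      ∑ r ∈ range n, ((n + 1 : ℕ) : ℝ) / (2 * (r + 1 : ℕ)) := by
    rw [← sum_range_reflect]
    refine sum_congr rfl fun r hr => ?_
    rw [mem_range] at hr
    congr 3
    omega
  calc ∑ x, linearSumBound (n + 1) H x ≤ ∑ x : ZMod (n + 1), g x.val :=
        sum_le_sum fun x _ => hg x
    _ = ∑ r ∈ range (n + 1), g r := Fin.sum_univ_eq_sum_range g (n + 1)
    _ = H + (n + 1 : ℕ) * harmonic n := by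
      rw [sum_range_succ', add_comm]
      simp only [g, if_pos, Nat.succ_ne_zero, if_false, Nat.add_sub_add_right, sum_add_distrib,
        hreflect, harmonic, Rat.cast_sum, mul_sum, ← two_mul, mul_sum]
      push_cast
      refine congrArg _ (sum_congr rfl fun r _ => ?_)
      field_simp
    _ ≤ H + (n + 1 : ℕ) * (1 + Real.log (n + 1 : ℕ)) := by
      gcongr
      calc (harmonic n : ℝ) ≤ 1 + Real.log n := harmonic_le_one_add_log n
        _ ≤ _ := by
          rcases n.eq_zero_or_pos with rfl | hn
          · simp
          · gcongr
            exact_mod_cast n.le_succ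

lemma norm_sum_stdAddChar_quadratic_sq_le (α β : ZMod q) (H : ℕ) :
    ‖∑ z ∈ Icc (1 : ℤ) H, stdAddChar (α * (z : ZMod q) ^ 2 + β * (z : ZMod q))‖ ^ 2 ≤
      ∑ h ∈ Icc (1 - H : ℤ) (H - 1), linearSumBound q H (2 * α * (h : ZMod q)) := by
  refine (norm_sum_Icc_sq_le_sum_norm_autocorrelation _ 1 H).trans (sum_le_sum fun h _ => ?_)
  have hshift (w : ℤ) :
      stdAddChar (α * ((w + h : ℤ) : ZMod q) ^ 2 + β * ((w + h : ℤ) : ZMod q)) *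
        conj (stdAddChar (α * (w : ZMod q) ^ 2 + β * (w : ZMod q))) =
      stdAddChar (α * (h : ZMod q) ^ 2 + β * (h : ZMod q)) *
        stdAddChar (2 * α * (h : ZMod q) * (w : ZMod q)) := by
    rw [← AddChar.map_neg_eq_conj, ← AddChar.map_add_eq_mul, ← AddChar.map_add_eq_mul]
    push_cast
    ring_nf
  simp only [hshift, ← mul_sum, norm_mul, AddChar.norm_apply, one_mul]
  exact norm_sum_stdAddChar_mul_Icc_le _ (by rw [Int.card_Icc]; omega)

lemma sum_linearSumBound_two_mul_le {α : ZMod q} (hα : IsUnit α) {H : ℕ} (hH : 1 ≤ H) :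
    ∑ h ∈ Icc (1 - H : ℤ) (H - 1), linearSumBound q H (2 * α * (h : ZMod q)) ≤
      (4 * H / q + 1) * (H + q * (1 + Real.log q)) := by
  let g : ZMod q → ℝ := fun x => linearSumBound q H (α * x)
  have hg (x : ZMod q) : 0 ≤ g x := linearSumBound_nonneg H _
  -- Passing to the integers `2h` avoids counting the solutions of `2y = x` in `ZMod q`.
  calc ∑ h ∈ Icc (1 - H : ℤ) (H - 1), linearSumBound q H (2 * α * (h : ZMod q))
      = ∑ h ∈ Icc (1 - H : ℤ) (H - 1), g ((2 * h : ℤ) : ZMod q) := by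
        refine sum_congr rfl fun h _ => ?_
        simp only [g]
        push_cast
        ring_nf
    _ ≤ ∑ k ∈ Icc (2 * (1 - H) : ℤ) (2 * (H - 1)), g k :=
        sum_Icc_comp_two_mul_le (fun k => g k) (fun k => hg k) _ _
    _ ≤ (((2 * (H - 1) - 2 * (1 - H) : ℤ) : ℝ) / q + 1) * ∑ x, g x :=
        sum_Icc_intCast_le_mul_sum g hg (by omega)
    _ ≤ (4 * H / q + 1) * (H + q * (1 + Real.log q)) := by
        rw [show ∑ x, g x = ∑ x, linearSumBound q H x from
          Equiv.sum_comp (Units.mulLeft hα.unit) (linearSumBound q H)]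
        gcongr
        · exact sum_nonneg fun x _ => linearSumBound_nonneg H x
        · push_cast
          linarith
        · exact sum_linearSumBound_le H

end StdAddChar

lemma le_two_mul_add_mul_log {q H : ℝ} (hq : 1 ≤ q) (hH : 1 ≤ H) :
    q ≤ 2 * (H + q * Real.log q) := by
  have hlog : 0 ≤ Real.log q := Real.log_nonneg hq
  rcases le_total q 2 with hq2 | hq2
  · nlinarith
  · have : 1 / 2 < Real.log q :=
      lt_of_lt_of_le (by linarith [Real.log_two_gt_d9]) (Real.log_le_log two_pos hq2)
    nlinarith

lemma four_mul_div_add_one_mul_le_sq {q H : ℝ} (hq : 1 ≤ q) (hH : 1 ≤ H) :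
    (4 * H / q + 1) * (H + q * (1 + Real.log q)) ≤
      (5 * (H / √q + √q * Real.log q)) ^ 2 := by
  have hq0 : 0 < q := by linarith
  have hsq : (H / √q + √q * Real.log q) ^ 2 = (H + q * Real.log q) ^ 2 / q := by
    field_simp
    rw [Real.sq_sqrt hq0.le]
    ring
  have hqL : 0 ≤ q * Real.log q := mul_nonneg hq0.le (Real.log_nonneg hq)
  have hle := le_two_mul_add_mul_log hq hH
  rw [mul_pow, hsq, div_add_one hq0.ne', div_mul_eq_mul_div, mul_div_assoc',
    div_le_div_iff_of_pos_right hq0]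
  nlinarith

/-- The quadratic exponential sum `∑_{z=1}^H e((az² + bz)/q)` with `gcd(a,q)=1`
is `O(H q^{-1/2} + q^{1/2} log q)`. -/
theorem quadratic_exponential_sum_bound :
    ∃ c : ℝ, ∀ q : ℕ, 1 ≤ q → ∀ a b : ℤ, Int.gcd a q = 1 → ∀ H : ℕ, 1 ≤ H →
      ‖∑ z ∈ Finset.Icc 1 H,
          Complex.exp (2 * Real.pi * Complex.I * ((a * z ^ 2 + b * z : ℤ) : ℂ) / (q : ℂ))‖
        ≤ c * ((H : ℝ) / Real.sqrt q + Real.sqrt q * Real.log q) := by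
  refine ⟨5, fun q hq a b hab H hH => ?_⟩
  have : NeZero q := ⟨by omega⟩
  have hunit : IsUnit (a : ZMod q) :=
    IsUnit.of_mul_eq_one _ (ZMod.coe_int_mul_inv_eq_one (Int.isCoprime_iff_gcd_eq_one.mpr hab))
  have hsum : ∑ z ∈ Icc 1 H,
      exp (2 * Real.pi * I * ((a * z ^ 2 + b * z : ℤ) : ℂ) / (q : ℂ)) =
      ∑ z ∈ Icc (1 : ℤ) H,
        ZMod.stdAddChar ((a : ZMod q) * (z : ZMod q) ^ 2 + (b : ZMod q) * (z : ZMod q)) := by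
    rw [← Nat.cast_one (R := ℤ), ← Nat.map_castEmbedding_Icc, sum_map]
    refine sum_congr rfl fun z _ => ?_
    rw [← ZMod.stdAddChar_coe, Nat.castEmbedding_apply]
    push_cast
    rfl
  rw [hsum, ← pow_le_pow_iff_left₀ (norm_nonneg _) (by positivity) two_ne_zero]
  calc _ ≤ _ := norm_sum_stdAddChar_quadratic_sq_le _ _ H
    _ ≤ _ := sum_linearSumBound_two_mul_le hunit hH
    _ ≤ _ := four_mul_div_add_one_mul_le_sq (by exact_mod_cast hq) (by exact_mod_cast hH)
end

section
/- Let u, h be integers with h ≥ 2, let d ≥ 1, and let Z = { ∑_{ν=0}^{d} C(d,ν)·z_ν·u^{d-ν} : z_ν ∈ ℤ, 0 ≤ z_ν ≤ n·h^ν for ν = 0, ..., d }. Then for every (x_1, ..., x_n) ∈ [u+1, u+h]^n one has x_1^d + ⋯ + x_n^d ∈ Z, and #Z ≪ h^{d(d+1)/2}, with implied constant depending only on n and d. -/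
/-!
Shifting each coordinate by `u`, the binomial theorem writes `x^d` as
`∑_ν C(d,ν) (x - u)^ν u^{d-ν}` with `1 ≤ x - u ≤ h`, so summing over the coordinates gives a
point of `Z` with `z_ν = ∑_i (x_i - u)^ν ∈ [0, n h^ν]`. Hence `#Z` is at most the number of
admissible tuples `(z_ν)`, namely `∏_ν (n h^ν + 1) ≤ (n + 1)^{d+1} h^{0 + 1 + ⋯ + d}`.
-/

open Finset

theorem pow_eq_sum_choose_mul_sub_pow {R : Type*} [CommRing R] (x u : R) (d : ℕ) :
    x ^ d = ∑ ν : Fin (d + 1), (d.choose ν : R) * (x - u) ^ (ν : ℕ) * u ^ (d - (ν : ℕ)) := by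
  conv_lhs => rw [← sub_add_cancel x u, add_pow]
  rw [← Fin.sum_univ_eq_sum_range (fun k => (x - u) ^ k * u ^ (d - k) * (d.choose k : R))]
  exact sum_congr rfl fun ν _ => by ring

theorem sum_pow_eq_sum_choose_mul_sum_sub_pow {R ι : Type*} [CommRing R] [Fintype ι]
    (x : ι → R) (u : R) (d : ℕ) :
    ∑ i, x i ^ d =
      ∑ ν : Fin (d + 1), (d.choose ν : R) * (∑ i, (x i - u) ^ (ν : ℕ)) * u ^ (d - (ν : ℕ)) := by
  simp_rw [pow_eq_sum_choose_mul_sub_pow _ u d, mul_sum, sum_mul]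
  exact sum_comm

theorem sum_sub_pow_mem_Icc {ι : Type*} [Fintype ι] {x : ι → ℤ} {u h : ℤ}
    (hx : ∀ i, x i ∈ Set.Icc (u + 1) (u + h)) (ν : ℕ) :
    0 ≤ ∑ i, (x i - u) ^ ν ∧ ∑ i, (x i - u) ^ ν ≤ Fintype.card ι * h ^ ν := by
  have hlo i : 0 ≤ x i - u := by linarith [(hx i).1]
  have hhi i : x i - u ≤ h := by linarith [(hx i).2]
  refine ⟨sum_nonneg fun i _ => pow_nonneg (hlo i) ν, ?_⟩
  calc ∑ i, (x i - u) ^ ν ≤ ∑ _i : ι, h ^ ν :=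
        sum_le_sum fun i _ => pow_le_pow_left₀ (hlo i) (hhi i) ν
    _ = Fintype.card ι * h ^ ν := by simp

theorem ncard_image_Icc_le_prod {ι α : Type*} [Fintype ι] [DecidableEq ι]
    (f : (ι → ℤ) → α) {B : ι → ℤ} (hB : ∀ i, 0 ≤ B i) :
    ({z | ∃ zv : ι → ℤ, (∀ i, 0 ≤ zv i ∧ zv i ≤ B i) ∧ z = f zv}.ncard : ℤ) ≤
      ∏ i, (B i + 1) := by
  have hsub : {z | ∃ zv : ι → ℤ, (∀ i, 0 ≤ zv i ∧ zv i ≤ B i) ∧ z = f zv} ⊆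
      f '' ↑(Icc 0 B) := by
    rintro z ⟨zv, hzv, rfl⟩
    exact ⟨zv, mem_Icc.2 ⟨fun i => (hzv i).1, fun i => (hzv i).2⟩, rfl⟩
  calc ({z | ∃ zv : ι → ℤ, (∀ i, 0 ≤ zv i ∧ zv i ≤ B i) ∧ z = f zv}.ncard : ℤ)
      ≤ (f '' ↑(Icc 0 B)).ncard := by
        exact_mod_cast Set.ncard_le_ncard hsub ((Icc 0 B).finite_toSet.image f)
    _ ≤ #(Icc 0 B) := by exact_mod_cast Set.ncard_image_le (Icc 0 B).finite_toSet
    _ = ∏ i, (B i + 1) := by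
        rw [Pi.card_Icc]
        push_cast
        exact prod_congr rfl fun i _ => by
          rw [Pi.zero_apply, Int.card_Icc_of_le _ _ (by linarith [hB i]), sub_zero]

theorem sum_univ_fin_val (d : ℕ) : ∑ ν : Fin (d + 1), (ν : ℕ) = d * (d + 1) / 2 := by
  rw [Fin.sum_univ_eq_sum_range (fun k => k), sum_range_id, Nat.add_sub_cancel, mul_comm]

theorem prod_mul_pow_add_one_le {n h : ℤ} (hn : 0 ≤ n) (hh : 1 ≤ h) (d : ℕ) :
    ∏ ν : Fin (d + 1), (n * h ^ (ν : ℕ) + 1) ≤ (n + 1) ^ (d + 1) * h ^ (d * (d + 1) / 2) :=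
  calc ∏ ν : Fin (d + 1), (n * h ^ (ν : ℕ) + 1)
      ≤ ∏ ν : Fin (d + 1), ((n + 1) * h ^ (ν : ℕ)) := by
        refine prod_le_prod (fun ν _ => by positivity) fun ν _ => ?_
        nlinarith [one_le_pow₀ (n := (ν : ℕ)) hh]
    _ = (n + 1) ^ (d + 1) * h ^ (d * (d + 1) / 2) := by
        rw [prod_mul_distrib, prod_const, prod_pow_eq_pow_sum, sum_univ_fin_val, card_univ,
          Fintype.card_fin]

theorem power_sum_value_set_general (n d : ℕ) :
    ∃ C : ℝ, ∀ u h : ℤ, 2 ≤ h →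
      (∀ x : Fin n → ℤ, (∀ i, x i ∈ Set.Icc (u + 1) (u + h)) →
        (∑ i, x i ^ d) ∈
          {z : ℤ | ∃ zv : Fin (d + 1) → ℤ,
            (∀ ν : Fin (d + 1), 0 ≤ zv ν ∧ zv ν ≤ n * h ^ (ν : ℕ)) ∧
            z = ∑ ν : Fin (d + 1), (d.choose ν) * zv ν * u ^ (d - (ν : ℕ))}) ∧
      ({z : ℤ | ∃ zv : Fin (d + 1) → ℤ,
          (∀ ν : Fin (d + 1), 0 ≤ zv ν ∧ zv ν ≤ n * h ^ (ν : ℕ)) ∧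
          z = ∑ ν : Fin (d + 1), (d.choose ν) * zv ν * u ^ (d - (ν : ℕ))}.ncard : ℝ)
        ≤ C * (h : ℝ) ^ (d * (d + 1) / 2) := by
  refine ⟨((n : ℝ) + 1) ^ (d + 1), fun u h hh => ⟨fun x hx => ?_, ?_⟩⟩
  · refine ⟨fun ν => ∑ i, (x i - u) ^ (ν : ℕ), fun ν => ?_,
      sum_pow_eq_sum_choose_mul_sum_sub_pow x u d⟩
    simpa using sum_sub_pow_mem_Icc hx ν
  · have hcard := (ncard_image_Icc_le_prod
        (fun zv : Fin (d + 1) → ℤ =>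
          ∑ ν : Fin (d + 1), (d.choose ν : ℤ) * zv ν * u ^ (d - (ν : ℕ)))
        (B := fun ν : Fin (d + 1) => (n : ℤ) * h ^ (ν : ℕ)) fun ν => by positivity).trans
      (prod_mul_pow_add_one_le (Nat.cast_nonneg n) (by linarith) d)
    exact_mod_cast hcard

/-- Every power sum `x_1^d + ⋯ + x_n^d` with coordinates in `[u+1,u+h]` lies in the
set `Z = {∑_ν C(d,ν) z_ν u^{d-ν} : 0 ≤ z_ν ≤ n h^ν}`, and `#Z ≪ h^{d(d+1)/2}`. -/
theorem power_sum_value_set (n d : ℕ) (hn : 1 ≤ n) (hd : 1 ≤ d) :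
    ∃ C : ℝ, ∀ u h : ℤ, 2 ≤ h →
      (∀ x : Fin n → ℤ, (∀ i, x i ∈ Set.Icc (u + 1) (u + h)) →
        (∑ i, x i ^ d) ∈
          {z : ℤ | ∃ zv : Fin (d + 1) → ℤ,
            (∀ ν : Fin (d + 1), 0 ≤ zv ν ∧ zv ν ≤ n * h ^ (ν : ℕ)) ∧
            z = ∑ ν : Fin (d + 1), (d.choose ν) * zv ν * u ^ (d - (ν : ℕ))}) ∧
      ({z : ℤ | ∃ zv : Fin (d + 1) → ℤ,
          (∀ ν : Fin (d + 1), 0 ≤ zv ν ∧ zv ν ≤ n * h ^ (ν : ℕ)) ∧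
          z = ∑ ν : Fin (d + 1), (d.choose ν) * zv ν * u ^ (d - (ν : ℕ))}.ncard : ℝ)
        ≤ C * (h : ℝ) ^ (d * (d + 1) / 2) :=
  power_sum_value_set_general n d
end

section
/- Let q = p^r with p > max{2, r} prime and r ≥ 1, and let χ be a Dirichlet character modulo q generating the character group. Then there exists a polynomial F(Z) = ∑_{k=1}^{r-1} A_k Z^k ∈ ℤ[Z] with gcd(A_k, p) = 1 for all k, such that for all integers y, z with gcd(y, p) = 1, χ(y + pz) = χ(y)·e(F(pwz)/q), where w is the inverse of y modulo q with 1 ≤ w < q. -/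
/-!
For `r ≤ p` the truncated series `E(t) = ∑_{k<r} t^k/k!` and
`L(t) = ∑_{1≤k<r} (-1)^(k+1) t^k/k` make sense in `ZMod (p^r)`, and since any product of `r`
multiples of `p` vanishes there, they behave on the ideal `(p)` exactly like `exp` and
`log (1 + ·)`: `E(L(t)) = 1 + t` and `E(s + t) = E(s) E(t)`. Hence `u ↦ χ(E(pu))` is an additive
character of `ZMod (p^r)`, of the form `u ↦ e(au/p^r)`; it is trivial at `p^(r-1)`, so `a = pc`,
and then `χ(1 + pv) = χ(E(L(pv))) = e(c L(pv)/p^r)`. Writing `y + pz = y(1 + pwz)` gives the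
formula with `F = c L`. If `p ∣ c`, the same identity would make `χ` trivial at `1 + p^(r-1)`,
which a generator of the character group is not; so the coefficients `c (-1)^(k+1)/k` are prime
to `p`.
-/

open Finset Polynomial

open scoped Nat

section Factorial

variable {R : Type*} [CommRing R]

lemma isUnit_natCast_of_isUnit_factorial {m k : ℕ} (hm : IsUnit (m ! : R)) (hk0 : 0 < k)
    (hkm : k ≤ m) : IsUnit (k : R) :=
  isUnit_of_dvd_unit (Nat.cast_dvd_cast (Nat.dvd_factorial hk0 hkm)) hm

lemma isUnit_factorial_of_le {m k : ℕ} (hm : IsUnit (m ! : R)) (hkm : k ≤ m) :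
    IsUnit (k ! : R) :=
  isUnit_of_dvd_unit (Nat.cast_dvd_cast (Nat.factorial_dvd_factorial hkm)) hm

lemma inverse_factorial_mul_choose {k i : ℕ} (hk : IsUnit (k ! : R)) (hi : i ≤ k) :
    Ring.inverse (k ! : R) * k.choose i = Ring.inverse (i ! : R) * Ring.inverse ((k - i)! : R) := by
  have hfac : (k ! : R) = k.choose i * i ! * (k - i)! := by
    rw [← Nat.cast_mul, ← Nat.cast_mul, Nat.choose_mul_factorial_mul_factorial hi]
  have hchoose : IsUnit (k.choose i : R) :=
    isUnit_of_dvd_unit ⟨i ! * (k - i)!, by rw [hfac]; ring⟩ hk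
  rw [hfac, Ring.mul_inverse_rev, Ring.mul_inverse_rev, mul_assoc, mul_assoc,
    Ring.inverse_mul_cancel _ hchoose, mul_one, mul_comm]

end Factorial

namespace Polynomial

variable (R : Type*) [CommRing R]

/-- The truncations below degree `n` of `exp X` and `log (1 + X)`. Since `Ring.inverse` is `0` on
non-units, they are the genuine truncations only when `(n - 1)!` is invertible in `R`. -/
noncomputable def truncExp (n : ℕ) : R[X] :=
  ∑ k ∈ range n, C (Ring.inverse (k ! : R)) * X ^ k

noncomputable def truncLog (n : ℕ) : R[X] :=
  ∑ k ∈ Ico 1 n, C ((-1) ^ (k + 1) * Ring.inverse (k : R)) * X ^ k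

variable {R} {n : ℕ}

lemma eval_truncExp (t : R) :
    (truncExp R n).eval t = ∑ k ∈ range n, Ring.inverse (k ! : R) * t ^ k := by
  simp [truncExp, eval_finsetSum]

lemma eval_truncLog (t : R) :
    (truncLog R n).eval t = ∑ k ∈ Ico 1 n, (-1) ^ (k + 1) * Ring.inverse (k : R) * t ^ k := by
  simp [truncLog, eval_finsetSum]

lemma truncExp_succ :
    truncExp R (n + 1) = truncExp R n + C (Ring.inverse (n ! : R)) * X ^ n :=
  sum_range_succ _ _

lemma eval_zero_truncExp (hn : n ≠ 0) : (truncExp R n).eval 0 = 1 := by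
  obtain ⟨m, rfl⟩ := Nat.exists_eq_succ_of_ne_zero hn
  simp [eval_truncExp, sum_range_succ']

lemma X_dvd_truncLog : X ∣ truncLog R n :=
  dvd_sum fun k hk => dvd_mul_of_dvd_right (dvd_pow_self X (by simp at hk; omega)) _

lemma derivative_truncExp_succ (hn : IsUnit (n ! : R)) :
    derivative (truncExp R (n + 1)) = truncExp R n := by
  rw [truncExp, derivative_sum, sum_range_succ', truncExp]
  simp only [pow_zero, mul_one, derivative_C, add_zero, derivative_C_mul_X_pow,
    Nat.add_sub_cancel, Nat.cast_add_one]
  refine sum_congr rfl fun k hk => ?_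
  have hk1 : IsUnit ((k + 1 : ℕ) : R) :=
    isUnit_natCast_of_isUnit_factorial hn k.succ_pos (mem_range.mp hk)
  rw [Nat.factorial_succ, Nat.cast_mul, Ring.mul_inverse_rev, mul_assoc, ← Nat.cast_add_one,
    Ring.inverse_mul_cancel _ hk1, mul_one]

lemma one_add_X_mul_derivative_truncLog (hn : IsUnit ((n - 1)! : R)) :
    (1 + X) * derivative (truncLog R n) = 1 - (-X) ^ (n - 1) := by
  have hderiv : derivative (truncLog R n) = ∑ k ∈ range (n - 1), (-X) ^ k := by
    rw [truncLog, derivative_sum, sum_Ico_eq_sum_range]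
    refine sum_congr rfl fun k hk => ?_
    have hk1 : IsUnit ((1 + k : ℕ) : R) :=
      isUnit_natCast_of_isUnit_factorial hn (by omega) (by simp at hk; omega)
    rw [derivative_C_mul_X_pow, Nat.add_sub_cancel_left, mul_assoc, Ring.inverse_mul_cancel _ hk1,
      mul_one, map_pow, map_neg, map_one, neg_pow (X : R[X])]
    ring
  rw [hderiv]
  linear_combination -(geom_sum_mul (-X : R[X]) (n - 1))

lemma X_pow_succ_dvd_of_X_pow_dvd_one_add_X_mul_derivative_sub {D : R[X]} (hn : IsUnit (n ! : R))
    (h0 : D.coeff 0 = 0) (hD : X ^ n ∣ (1 + X) * derivative D - D) : X ^ (n + 1) ∣ D := by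
  refine X_pow_dvd_iff.mpr fun k hk => ?_
  induction k with
  | zero => exact h0
  | succ k ih =>
    have hk1 : IsUnit ((k + 1 : ℕ) : R) :=
      isUnit_natCast_of_isUnit_factorial hn k.succ_pos (by omega)
    have hDk : D.coeff k = 0 := ih (by omega)
    have hX : (X * derivative D).coeff k = 0 := by
      cases k with
      | zero => simp
      | succ j => simp [coeff_derivative, hDk]
    have hcoeff := X_pow_dvd_iff.mp hD k (by omega)
    rw [coeff_sub, add_mul, one_mul, coeff_add, hX, coeff_derivative, hDk] at hcoeff
    exact hk1.mul_left_eq_zero.mp (by push_cast; simpa using hcoeff)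

/-- `G = E ∘ L` satisfies `(1 + X) G' ≡ G` modulo `X ^ (n - 1)`, because `(1 + X) L' ≡ 1` and
`E' ≡ E`; so does `1 + X`, and such a solution is determined modulo `X ^ n` by its constant
term. -/
lemma X_pow_dvd_truncExp_comp_truncLog_sub (hn : IsUnit ((n - 1)! : R)) :
    X ^ n ∣ (truncExp R n).comp (truncLog R n) - (1 + X) := by
  obtain _ | m := n
  · simp
  have hm : IsUnit (m ! : R) := by simpa using hn
  set L := truncLog R (m + 1)
  have hL : X ^ m ∣ L ^ m := pow_dvd_pow_of_dvd X_dvd_truncLog m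
  have hODE : (1 + X) * derivative ((truncExp R (m + 1)).comp L) - (truncExp R (m + 1)).comp L
      = -((-X) ^ m * (truncExp R m).comp L) - C (Ring.inverse (m ! : R)) * L ^ m := by
    rw [derivative_comp, derivative_truncExp_succ hm, ← mul_assoc,
      one_add_X_mul_derivative_truncLog hn, truncExp_succ]
    simp only [add_comp, mul_comp, C_comp, X_pow_comp, Nat.add_sub_cancel]
    ring
  refine X_pow_succ_dvd_of_X_pow_dvd_one_add_X_mul_derivative_sub hm ?_ ?_
  · rw [coeff_sub, coeff_zero_eq_eval_zero, coeff_zero_eq_eval_zero, eval_comp,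
      ← coeff_zero_eq_eval_zero, X_dvd_iff.mp X_dvd_truncLog, eval_zero_truncExp m.succ_ne_zero]
    simp
  · have hdiff : (1 + X) * derivative ((truncExp R (m + 1)).comp L - (1 + X))
        - ((truncExp R (m + 1)).comp L - (1 + X))
        = (1 + X) * derivative ((truncExp R (m + 1)).comp L) - (truncExp R (m + 1)).comp L := by
      simp only [derivative_sub, derivative_add, derivative_one, derivative_X]
      ring
    rw [hdiff, hODE, neg_pow]
    exact dvd_sub (dvd_neg.mpr (dvd_mul_of_dvd_left (dvd_mul_left _ _) _))
      (dvd_mul_of_dvd_right hL _)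

lemma eval_truncExp_eval_truncLog (hn : IsUnit ((n - 1)! : R)) {t : R} (ht : t ^ n = 0) :
    (truncExp R n).eval ((truncLog R n).eval t) = 1 + t := by
  obtain ⟨Q, hQ⟩ := X_pow_dvd_truncExp_comp_truncLog_sub hn
  have h := congrArg (eval t) hQ
  simp only [eval_sub, eval_comp, eval_add, eval_one, eval_X, eval_mul, eval_pow, ht,
    zero_mul] at h
  exact sub_eq_zero.mp h

lemma eval_truncExp_add (hn : IsUnit ((n - 1)! : R)) {a b : R}
    (hab : ∀ i j, n ≤ i + j → a ^ i * b ^ j = 0) :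
    (truncExp R n).eval (a + b) = (truncExp R n).eval a * (truncExp R n).eval b := by
  set f : ℕ → ℕ → R := fun i j =>
    Ring.inverse (i ! : R) * a ^ i * (Ring.inverse (j ! : R) * b ^ j)
  have htrunc : ∀ i ∈ range n, ∑ j ∈ range n, f i j = ∑ j ∈ range (n - i), f i j := by
    refine fun i hi => (sum_subset (range_subset_range.mpr (Nat.sub_le n i)) fun j _ hj => ?_).symm
    have hij : n ≤ i + j := by simp at hj; omega
    simp only [f]
    linear_combination (Ring.inverse (i ! : R) * Ring.inverse (j ! : R)) * hab i j hij
  rw [eval_truncExp, eval_truncExp, eval_truncExp, sum_mul_sum, sum_congr rfl htrunc,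
    ← sum_range_diag_flip]
  refine sum_congr rfl fun k hk => ?_
  rw [add_pow, mul_sum]
  refine sum_congr rfl fun i hi => ?_
  have hk : IsUnit (k ! : R) := isUnit_factorial_of_le hn (by simp at hk; omega)
  have hik : i ≤ k := by simp at hi; omega
  calc Ring.inverse (k ! : R) * (a ^ i * b ^ (k - i) * k.choose i)
      = (Ring.inverse (k ! : R) * k.choose i) * (a ^ i * b ^ (k - i)) := by ring
    _ = f i (k - i) := by rw [inverse_factorial_mul_choose hk hik]; ring

end Polynomial

namespace ZMod

lemma natCast_pow_self_eq_zero (n k : ℕ) : (n : ZMod (n ^ k)) ^ k = 0 := by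
  exact_mod_cast natCast_self (n ^ k)

variable {p r : ℕ} [hp : Fact p.Prime]

lemma isUnit_factorial_of_lt (hr : r ≠ 0) {k : ℕ} (hk : k < p) :
    IsUnit (k ! : ZMod (p ^ r)) := by
  rw [isUnit_natCast_iff_not_dvd_pow hp.out (Nat.pos_of_ne_zero hr), hp.out.dvd_factorial]
  omega

lemma natCast_pow_pred_ne_zero (hr : r ≠ 0) : (p : ZMod (p ^ r)) ^ (r - 1) ≠ 0 := by
  rw [← Nat.cast_pow, Ne, natCast_eq_zero_iff, Nat.pow_dvd_pow_iff_le_right hp.out.one_lt]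
  omega

lemma natCast_dvd_of_not_isUnit (hr : r ≠ 0) {a : ZMod (p ^ r)} (ha : ¬ IsUnit a) :
    (p : ZMod (p ^ r)) ∣ a := by
  rw [← natCast_zmod_val a, isUnit_natCast_iff_not_dvd_pow hp.out (Nat.pos_of_ne_zero hr),
    not_not] at ha
  obtain ⟨d, hd⟩ := ha
  exact ⟨d, by rw [← natCast_zmod_val a, hd, Nat.cast_mul]⟩

lemma natCast_dvd_of_mul_pow_pred_eq_zero (hr : r ≠ 0) {a : ZMod (p ^ r)}
    (ha : a * p ^ (r - 1) = 0) : (p : ZMod (p ^ r)) ∣ a :=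
  natCast_dvd_of_not_isUnit hr fun hu =>
    natCast_pow_pred_ne_zero hr (hu.mul_right_eq_zero.mp ha)

lemma mulShift_stdAddChar_surjective (N : ℕ) [NeZero N] :
    Function.Surjective (stdAddChar (N := N)).mulShift :=
  ((Fintype.bijective_iff_injective_and_card _).mpr
    ⟨AddChar.to_mulShift_inj_of_isPrimitive (isPrimitive_stdAddChar N), AddChar.card_eq.symm⟩).2

end ZMod

namespace DirichletCharacter

open ZMod

variable {p r : ℕ} [Fact p.Prime]

lemma apply_ne_one_of_forall_eq_pow {N : ℕ} [NeZero N] {χ : DirichletCharacter ℂ N}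
    (hgen : ∀ ψ : DirichletCharacter ℂ N, ∃ m : ℕ, ψ = χ ^ m) {u : (ZMod N)ˣ}
    (hu : u ≠ 1) : χ u ≠ 1 := by
  obtain ⟨ψ, hψ⟩ :=
    exists_apply_ne_one_of_hasEnoughRootsOfUnity ℂ fun h => hu (Units.val_eq_one.mp h)
  obtain ⟨m, rfl⟩ := hgen ψ
  intro h
  rw [MulChar.pow_apply_coe, h, one_pow] at hψ
  exact hψ rfl

lemma apply_one_add_pow_pred_ne_one (hr : 2 ≤ r) {χ : DirichletCharacter ℂ (p ^ r)}
    (hgen : ∀ ψ : DirichletCharacter ℂ (p ^ r), ∃ m : ℕ, ψ = χ ^ m) :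
    χ (1 + p ^ (r - 1)) ≠ 1 := by
  have hp_pow := natCast_pow_self_eq_zero p r
  have hnil : IsNilpotent ((p : ZMod (p ^ r)) ^ (r - 1)) :=
    ⟨r, by rw [← pow_mul, mul_comm, pow_mul, hp_pow, zero_pow (by omega)]⟩
  refine apply_ne_one_of_forall_eq_pow hgen (u := hnil.isUnit_one_add.unit) fun h => ?_
  have h' := congrArg Units.val h
  rw [IsUnit.unit_spec, Units.val_one, add_eq_left] at h'
  exact natCast_pow_pred_ne_zero (by omega) h'

lemma exists_apply_eval_truncExp_eq_stdAddChar (hr : r ≠ 0) (hrp : r ≤ p)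
    (χ : DirichletCharacter ℂ (p ^ r)) :
    ∃ a : ZMod (p ^ r), ∀ u, χ ((truncExp _ r).eval (p * u)) = stdAddChar (a * u) := by
  have hfac : IsUnit ((r - 1)! : ZMod (p ^ r)) := isUnit_factorial_of_lt hr (by omega)
  have hp_pow := natCast_pow_self_eq_zero p r
  let ψ : AddChar (ZMod (p ^ r)) ℂ :=
    { toFun := fun u => χ ((truncExp _ r).eval (p * u))
      map_zero_eq_one' := by simp [eval_zero_truncExp hr]
      map_add_eq_mul' := fun u v => by
        rw [mul_add, eval_truncExp_add hfac, map_mul]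
        intro i j hij
        rw [mul_pow, mul_pow, mul_mul_mul_comm, ← pow_add, ← Nat.add_sub_cancel' hij, pow_add,
          hp_pow, zero_mul, zero_mul] }
  obtain ⟨a, ha⟩ := mulShift_stdAddChar_surjective _ ψ
  exact ⟨a, fun u => (DFunLike.congr_fun ha u).symm⟩

lemma exists_apply_one_add_eq_stdAddChar (hr : r ≠ 0) (hrp : r ≤ p)
    (χ : DirichletCharacter ℂ (p ^ r)) :
    ∃ c : ZMod (p ^ r), ∀ v, χ (1 + p * v) = stdAddChar (c * (truncLog _ r).eval (p * v)) := by
  have hfac : IsUnit ((r - 1)! : ZMod (p ^ r)) := isUnit_factorial_of_lt hr (by omega)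
  have hp_pow := natCast_pow_self_eq_zero p r
  obtain ⟨a, ha⟩ := exists_apply_eval_truncExp_eq_stdAddChar hr hrp χ
  have hap : a * p ^ (r - 1) = 0 := by
    refine injective_stdAddChar ?_
    rw [← ha, ← pow_succ', Nat.sub_add_cancel (Nat.pos_of_ne_zero hr), hp_pow,
      eval_zero_truncExp hr, map_one, AddChar.map_zero_eq_one]
  obtain ⟨c, rfl⟩ := natCast_dvd_of_mul_pow_pred_eq_zero hr hap
  obtain ⟨Q, hQ⟩ : X ∣ truncLog (ZMod (p ^ r)) r := X_dvd_truncLog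
  refine ⟨c, fun v => ?_⟩
  have hpv : ((p : ZMod (p ^ r)) * v) ^ r = 0 := by rw [mul_pow, hp_pow, zero_mul]
  rw [← eval_truncExp_eval_truncLog hfac hpv, hQ, eval_mul, eval_X, mul_assoc, ha]
  congr 1
  ring

lemma isUnit_of_apply_one_add_pow_pred_ne_one (hr : 2 ≤ r)
    {χ : DirichletCharacter ℂ (p ^ r)} {c : ZMod (p ^ r)}
    (hc : ∀ v, χ (1 + p * v) = stdAddChar (c * (truncLog _ r).eval (p * v)))
    (hχ : χ (1 + p ^ (r - 1)) ≠ 1) : IsUnit c := by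
  by_contra hcu
  obtain ⟨d, rfl⟩ := natCast_dvd_of_not_isUnit (by omega) hcu
  obtain ⟨Q, hQ⟩ : X ∣ truncLog (ZMod (p ^ r)) r := X_dvd_truncLog
  have hpow : (p : ZMod (p ^ r)) ^ (r - 1) = p * p ^ (r - 2) := by
    rw [← pow_succ']; congr 1; omega
  have hp_pow : (p : ZMod (p ^ r)) ^ (r - 2 + 2) = 0 := by
    rw [Nat.sub_add_cancel hr, natCast_pow_self_eq_zero]
  apply hχ
  rw [hpow, hc, hQ, eval_mul, eval_X, ← AddChar.map_zero_eq_one (stdAddChar (N := p ^ r))]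
  generalize Q.eval _ = q
  congr 1
  linear_combination (d * q) * hp_pow

end DirichletCharacter

open DirichletCharacter in
/-- Postnikov's formula: if `χ` generates the character group modulo `p^r`
(`p > max{2,r}` prime), there is a polynomial `F(Z) = ∑_{k=1}^{r-1} A_k Z^k`
with `gcd(A_k, p) = 1` such that `χ(y + pz) = χ(y) e(F(pwz)/p^r)` whenever
`gcd(y,p) = 1` and `w` is the inverse of `y` modulo `p^r` with `1 ≤ w < p^r`. -/
theorem postnikov_formula (p r : ℕ) (hp : p.Prime) (hr : 1 ≤ r)
    (hpr : max 2 r < p)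
    (χ : DirichletCharacter ℂ (p ^ r))
    (hgen : ∀ ψ : DirichletCharacter ℂ (p ^ r), ∃ m : ℕ, ψ = χ ^ m) :
    ∃ A : ℕ → ℤ, (∀ k ∈ Finset.Icc 1 (r - 1), Int.gcd (A k) p = 1) ∧
      ∀ y z w : ℤ, Int.gcd y p = 1 →
        (y * w) % (p ^ r : ℕ) = 1 % (p ^ r : ℕ) → 1 ≤ w → w < (p ^ r : ℕ) →
        χ ((y + p * z : ℤ) : ZMod (p ^ r)) =
          χ ((y : ℤ) : ZMod (p ^ r)) *
            Complex.exp (2 * Real.pi * Complex.I *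
              ((∑ k ∈ Finset.Icc 1 (r - 1), A k * (p * w * z) ^ k : ℤ) : ℂ) /
                ((p ^ r : ℕ) : ℂ)) := by
  have : Fact p.Prime := ⟨hp⟩
  have hr0 : r ≠ 0 := by omega
  obtain ⟨c, hc⟩ := exists_apply_one_add_eq_stdAddChar hr0 (by omega) χ
  set a : ℕ → ZMod (p ^ r) := fun k => c * ((-1) ^ (k + 1) * Ring.inverse (k : ZMod (p ^ r)))
  refine ⟨fun k => ((a k).val : ℤ), fun k hk => ?_, fun y z w _ hyw _ _ => ?_⟩
  · obtain ⟨hk1, hkr⟩ := mem_Icc.mp hk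
    have hcu : IsUnit c := isUnit_of_apply_one_add_pow_pred_ne_one (by omega) hc
      (apply_one_add_pow_pred_ne_one (by omega) hgen)
    have hku : IsUnit (k : ZMod (p ^ r)) :=
      isUnit_natCast_of_isUnit_factorial (ZMod.isUnit_factorial_of_lt hr0 (by omega)) hk1 le_rfl
    have ha : IsUnit (a k) := hcu.mul ((isUnit_neg_one.pow _).mul hku.ringInverse)
    rw [Int.gcd_natCast_natCast]
    exact (ZMod.val_coe_unit_coprime ha.unit).coprime_dvd_right (dvd_pow_self p hr0)
  · have hyw' : (y : ZMod (p ^ r)) * w = 1 := by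
      exact_mod_cast (ZMod.intCast_eq_intCast_iff' _ _ _).mpr hyw
    have hF : ((∑ k ∈ Icc 1 (r - 1), ((a k).val : ℤ) * (p * w * z) ^ k : ℤ) : ZMod (p ^ r))
        = c * (truncLog _ r).eval (p * ((w : ZMod (p ^ r)) * z)) := by
      rw [eval_truncLog, mul_sum, ← Finset.Ico_add_one_right_eq_Icc, Nat.sub_add_cancel hr]
      push_cast [ZMod.natCast_zmod_val]
      refine sum_congr rfl fun k _ => ?_
      simp only [a]; ring
    calc χ ((y + p * z : ℤ) : ZMod (p ^ r)) = χ (y * (1 + p * (w * z))) := by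
          congr 1; push_cast; linear_combination (-(p : ZMod (p ^ r)) * z) * hyw'
      _ = _ := by rw [map_mul, hc, ← hF, ZMod.stdAddChar_coe]
end
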